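/- arXiv:1910.12743 — 10 statements merged into one kernel-verified Lean document; each statement's English description precedes it below -/
import Mathlib

section
/- Nonarchimedean Liouville theorem for Banach-space-valued entire functions (Proposition 'B-analogue of Liouville's Theorem'): let n ≥ 1 and let (f_ι)_{ι∈ℕⁿ} be a family of elements of B such that for every real r > 0 one has ‖f_ι‖·r^{|ι|} → 0 along the cofinite filter on ℕⁿ (so that F(x) = Σ_{ι∈ℕⁿ} f_ι·x^ι converges in B for every x ∈ Lⁿ). If F is bounded, i.e. there exists M ≥ 0 with ‖F(x)‖ ≤ M for all x ∈ Lⁿ, then f_ι = 0 for every ι ≠ (0,…,0); equivalently, F is the constant function with value f₀. -/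
open Filter IsUltrametricDist

private lemma baseN_inj : ∀ {n N : ℕ} {a b : Fin n → ℕ},
    (∀ k, a k < N) → (∀ k, b k < N) →
    (∑ k, a k * N ^ (k : ℕ)) = (∑ k, b k * N ^ (k : ℕ)) → a = b := by
  intro n
  induction n with
  | zero => intro N a b _ _ _; funext k; exact k.elim0
  | succ m ih =>
    intro N a b ha hb h
    have hN : 0 < N := lt_of_le_of_lt (Nat.zero_le _) (ha 0)
    have key : ∀ c : Fin (m+1) → ℕ,
        (∑ k, c k * N ^ (k : ℕ)) = c 0 + (∑ k : Fin m, c k.succ * N ^ (k : ℕ)) * N := by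
      intro c
      rw [Fin.sum_univ_succ, Finset.sum_mul]
      simp only [Fin.val_zero, pow_zero, mul_one, Fin.val_succ, pow_succ, mul_assoc]
    rw [key a, key b] at h
    have h0 : a 0 = b 0 := by
      have := congrArg (· % N) h
      simpa [Nat.add_mul_mod_self_right, Nat.mod_eq_of_lt (ha 0), Nat.mod_eq_of_lt (hb 0)]
        using this
    rw [h0] at h
    have htail : (∑ k : Fin m, a k.succ * N ^ (k : ℕ)) = ∑ k : Fin m, b k.succ * N ^ (k : ℕ) :=
      Nat.eq_of_mul_eq_mul_right hN (Nat.add_left_cancel h)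
    have h2 : (fun k : Fin m => a k.succ) = fun k : Fin m => b k.succ :=
      ih (fun k => ha k.succ) (fun k => hb k.succ) htail
    funext k
    refine Fin.cases h0 (fun i => ?_) k
    exact congrFun h2 i

private lemma pow_scaled_unique {c c' : ℝ} (hc : 0 < c) (hc' : 0 < c') {m m' : ℕ}
    (hmm : m ≠ m') :
    Set.Subsingleton {t : ℝ | 0 < t ∧ c * t ^ m = c' * t ^ m'} := by
  have main : ∀ (c c' : ℝ), 0 < c → 0 < c' → ∀ (m p : ℕ), p ≠ 0 →
      ∀ t₁ t₂ : ℝ, 0 < t₁ → 0 < t₂ → c * t₁ ^ m = c' * t₁ ^ (m + p) →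
      c * t₂ ^ m = c' * t₂ ^ (m + p) → t₁ = t₂ := by
    intro c c' hc hc' m p hp t₁ t₂ ht₁ ht₂ h₁ h₂
    have e₁ : c = c' * t₁ ^ p := by
      have hpos : (0:ℝ) < t₁ ^ m := pow_pos ht₁ m
      rw [pow_add] at h₁
      have := mul_right_cancel₀ (ne_of_gt hpos) (by linarith [h₁] : c * t₁ ^ m = (c' * t₁ ^ p) * t₁ ^ m)
      linarith [this]
    have e₂ : c = c' * t₂ ^ p := by
      have hpos : (0:ℝ) < t₂ ^ m := pow_pos ht₂ m
      rw [pow_add] at h₂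
      have := mul_right_cancel₀ (ne_of_gt hpos) (by linarith [h₂] : c * t₂ ^ m = (c' * t₂ ^ p) * t₂ ^ m)
      linarith [this]
    have hpp : t₁ ^ p = t₂ ^ p := mul_left_cancel₀ (ne_of_gt hc') (e₁.symm.trans e₂)
    exact (pow_left_strictMonoOn₀ hp).injOn (Set.mem_setOf_eq ▸ ht₁.le)
      (Set.mem_setOf_eq ▸ ht₂.le) hpp
  intro t₁ ht₁ t₂ ht₂
  rcases lt_or_gt_of_ne hmm with hlt | hlt
  · obtain ⟨p, hp, rfl⟩ : ∃ p, p ≠ 0 ∧ m' = m + p := ⟨m' - m, by omega, by omega⟩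
    exact main c c' hc hc' m p hp t₁ t₂ ht₁.1 ht₂.1 ht₁.2 ht₂.2
  · obtain ⟨p, hp, rfl⟩ : ∃ p, p ≠ 0 ∧ m = m' + p := ⟨m - m', by omega, by omega⟩
    exact main c' c hc' hc m' p hp t₁ t₂ ht₁.1 ht₂.1 ht₁.2.symm ht₂.2.symm

set_option maxHeartbeats 1000000 in
/-- Nonarchimedean Liouville theorem for Banach-space-valued entire functions. -/
theorem stmt_1 {L B : Type*} [DenselyNormedField L] [IsUltrametricDist L] [CompleteSpace L]
    [NormedAddCommGroup B] [NormedSpace L B] [IsUltrametricDist B] [CompleteSpace B]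
    (n : ℕ) (hn : 1 ≤ n) (f : (Fin n → ℕ) → B)
    (hf : ∀ r : ℝ, 0 < r →
      Filter.Tendsto (fun ι : Fin n → ℕ => ‖f ι‖ * r ^ (∑ k, ι k))
        Filter.cofinite (nhds (0 : ℝ)))
    (M : ℝ) (hM : 0 ≤ M)
    (hbd : ∀ x : Fin n → L, ‖∑' ι : Fin n → ℕ, (∏ k, x k ^ ι k) • f ι‖ ≤ M) :
    (∀ x : Fin n → L, Summable fun ι : Fin n → ℕ => (∏ k, x k ^ ι k) • f ι) ∧
    ∀ ι : Fin n → ℕ, ι ≠ 0 → f ι = 0 := by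
  have hnorm : ∀ (x : Fin n → L) (ι : Fin n → ℕ),
      ‖(∏ k, x k ^ ι k) • f ι‖ = (∏ k, ‖x k‖ ^ ι k) * ‖f ι‖ := by
    intro x ι
    rw [norm_smul, norm_prod]
    simp [norm_pow]
  -- Summability
  have hsum : ∀ x : Fin n → L, Summable fun ι : Fin n → ℕ => (∏ k, x k ^ ι k) • f ι := by
    intro x
    apply NonarchimedeanAddGroup.summable_of_tendsto_cofinite_zero
    rw [tendsto_zero_iff_norm_tendsto_zero]
    set r : ℝ := 1 + ∑ k, ‖x k‖ with hr
    have hr0 : 0 < r := by positivity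
    have hrk : ∀ k, ‖x k‖ ≤ r := by
      intro k
      have : ‖x k‖ ≤ ∑ j, ‖x j‖ :=
        Finset.single_le_sum (fun j _ => norm_nonneg (x j)) (Finset.mem_univ k)
      linarith
    refine squeeze_zero (fun ι => norm_nonneg _) (fun ι => ?_)
      (by simpa [mul_comm] using hf r hr0)
    rw [hnorm, mul_comm (∏ k, ‖x k‖ ^ ι k) (‖f ι‖)]
    gcongr
    calc (∏ k, ‖x k‖ ^ ι k) ≤ ∏ k, r ^ ι k := by
          refine Finset.prod_le_prod (fun k _ => by positivity) (fun k _ => ?_)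
          exact pow_le_pow_left₀ (norm_nonneg _) (hrk k) _
      _ = r ^ (∑ k, ι k) := Finset.prod_pow_eq_pow_sum _ _ _
  refine ⟨hsum, ?_⟩
  intro ι₀ hι₀ne
  by_contra h0
  have hf0 : 0 < ‖f ι₀‖ := norm_pos_iff.mpr h0
  set d : ℕ := ∑ k, ι₀ k with hd
  have hd1 : 1 ≤ d := by
    rcases Nat.eq_zero_or_pos d with h | h
    · exfalso
      apply hι₀ne
      funext k
      have := (Finset.sum_eq_zero_iff).mp h k (Finset.mem_univ k)
      simpa using this
    · exact h
  -- choose r₀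
  obtain ⟨c₀, hc₀l, hc₀r⟩ := NormedField.exists_lt_norm_lt L
    (le_trans zero_le_one (le_max_left 1 ((M+1)/‖f ι₀‖))) (lt_add_one _)
  set r₀ : ℝ := ‖c₀‖ with hr₀
  have hr₀1 : 1 < r₀ := lt_of_le_of_lt (le_max_left _ _) hc₀l
  have hr₀0 : 0 < r₀ := lt_trans one_pos hr₀1
  set B₀ : ℝ := ‖f ι₀‖ * r₀ ^ d with hB₀def
  have hB₀M : M < B₀ := by
    have h1 : (M+1)/‖f ι₀‖ < r₀ := lt_of_le_of_lt (le_max_right _ _) hc₀l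
    have h2 : M + 1 < ‖f ι₀‖ * r₀ := by
      rw [div_lt_iff₀ hf0] at h1
      linarith [h1]
    have h3 : r₀ ≤ r₀ ^ d := by
      calc r₀ = r₀ ^ 1 := (pow_one r₀).symm
        _ ≤ r₀ ^ d := pow_le_pow_right₀ hr₀1.le hd1
    nlinarith [h3, hf0]
  have hB₀ : 0 < B₀ := lt_of_le_of_lt hM hB₀M
  -- finite set S
  have hfin : {ι : Fin n → ℕ | B₀/2 ≤ ‖f ι‖ * (2*r₀) ^ (∑ k, ι k)}.Finite := by
    have h2 := hf (2*r₀) (by positivity)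
    have h3 : {ι : Fin n → ℕ | ‖f ι‖ * (2*r₀) ^ (∑ k, ι k) < B₀/2} ∈ cofinite :=
      h2 (Iio_mem_nhds (by positivity))
    rw [mem_cofinite] at h3
    convert h3 using 1
    ext ι
    simp [not_lt]
  set S : Finset (Fin n → ℕ) := hfin.toFinset with hSdef
  have hmemS : ∀ ι, ι ∈ S ↔ B₀/2 ≤ ‖f ι‖ * (2*r₀) ^ (∑ k, ι k) := by
    intro ι; rw [hSdef, Set.Finite.mem_toFinset]; rfl
  have hfS : ∀ ι ∈ S, 0 < ‖f ι‖ := by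
    intro ι hι
    rw [hmemS] at hι
    by_contra h
    push_neg at h
    have h' : ‖f ι‖ = 0 := le_antisymm h (norm_nonneg _)
    rw [h', zero_mul] at hι
    linarith
  have hι₀S : ι₀ ∈ S := by
    rw [hmemS]
    have h1 : r₀ ^ d ≤ (2*r₀) ^ d := pow_le_pow_left₀ hr₀0.le (by linarith) d
    have h2 : B₀ ≤ ‖f ι₀‖ * (2*r₀) ^ d := by
      rw [hB₀def]; nlinarith [hf0]
    linarith
  -- base N
  set N : ℕ := 1 + S.sup (fun ι => Finset.univ.sup ι) with hNdef
  have hNbound : ∀ ι ∈ S, ∀ k, ι k < N := by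
    intro ι hι k
    have h1 : ι k ≤ Finset.univ.sup ι := Finset.le_sup (Finset.mem_univ k)
    have h2 : Finset.univ.sup ι ≤ S.sup (fun ι => Finset.univ.sup ι) := Finset.le_sup hι
    omega
  have hN1 : 1 ≤ N := by omega
  set e : (Fin n → ℕ) → ℕ := fun ι => ∑ k, ι k * N ^ (k : ℕ) with hedef
  have he_inj : ∀ ι ∈ S, ∀ ι' ∈ S, e ι = e ι' → ι = ι' := by
    intro ι hι ι' hι' h
    exact baseN_inj (hNbound ι hι) (hNbound ι' hι') h
  -- bad set T
  set T : Set ℝ := ⋃ ι ∈ S, ⋃ ι' ∈ S,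
      {t : ℝ | 0 < t ∧ ι ≠ ι' ∧
        ‖f ι‖ * r₀ ^ (∑ k, ι k) * t ^ (e ι) = ‖f ι'‖ * r₀ ^ (∑ k, ι' k) * t ^ (e ι')}
      with hTdef
  have hT : T.Finite := by
    refine Set.Finite.biUnion S.finite_toSet (fun ι hι => ?_)
    refine Set.Finite.biUnion S.finite_toSet (fun ι' hι' => ?_)
    rcases eq_or_ne ι ι' with rfl | hne
    · convert Set.finite_empty
      ext t; simp
    · have hsub : {t : ℝ | 0 < t ∧ ι ≠ ι' ∧
          ‖f ι‖ * r₀ ^ (∑ k, ι k) * t ^ (e ι) = ‖f ι'‖ * r₀ ^ (∑ k, ι' k) * t ^ (e ι')} ⊆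
          {t : ℝ | 0 < t ∧
          ‖f ι‖ * r₀ ^ (∑ k, ι k) * t ^ (e ι) = ‖f ι'‖ * r₀ ^ (∑ k, ι' k) * t ^ (e ι')} :=
        fun t ht => ⟨ht.1, ht.2.2⟩
      refine Set.Finite.subset ?_ hsub
      have hee : e ι ≠ e ι' := fun h => hne (he_inj ι hι ι' hι' h)
      have hc : 0 < ‖f ι‖ * r₀ ^ (∑ k, ι k) :=
        mul_pos (hfS ι hι) (pow_pos hr₀0 _)
      have hc' : 0 < ‖f ι'‖ * r₀ ^ (∑ k, ι' k) :=
        mul_pos (hfS ι' hι') (pow_pos hr₀0 _)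
      exact (pow_scaled_unique hc hc' hee).finite
  -- choose t
  set β : ℝ := (2:ℝ) ^ ((((N:ℝ)) ^ n)⁻¹) with hβdef
  have hNR : (0:ℝ) < (N:ℝ) := by exact_mod_cast hN1
  have hβ1 : 1 < β := by
    rw [hβdef]
    rw [Real.one_lt_rpow_iff_of_pos (by norm_num)]
    exact Or.inl ⟨one_lt_two, by positivity⟩
  have hIinf : (Set.Ioo (1:ℝ) β).Infinite :=
    Set.infinite_coe_iff.mp (Set.Ioo.infinite hβ1)
  have hopen : IsOpen (Set.Ioo (1:ℝ) β \ T) := isOpen_Ioo.sdiff hT.isClosed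
  obtain ⟨t₁, ht₁⟩ := (hIinf.diff hT).nonempty
  obtain ⟨ε, hε, hball⟩ := Metric.isOpen_iff.mp hopen t₁ ht₁
  have ht₁1 : 1 < t₁ := ht₁.1.1
  obtain ⟨u, hul, hur⟩ := NormedField.exists_lt_norm_lt L
    (le_max_left 0 (t₁ - ε)) (max_lt (by linarith) (by linarith))
  set t : ℝ := ‖u‖ with htdef
  have htmem : t ∈ Set.Ioo (1:ℝ) β \ T := by
    apply hball
    rw [Real.ball_eq_Ioo]
    constructor
    · exact lt_of_le_of_lt (le_max_right 0 (t₁ - ε)) hul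
    · linarith
  have ht1 : 1 < t := htmem.1.1
  have htβ : t < β := htmem.1.2
  have htT : t ∉ T := htmem.2
  have ht0 : 0 < t := lt_trans one_pos ht1
  -- t^{N^k} ≤ 2
  have htpow : ∀ k : Fin n, t ^ (N ^ (k:ℕ)) ≤ 2 := by
    intro k
    have h1 : t ^ (N ^ (k:ℕ)) ≤ β ^ (N ^ (k:ℕ)) :=
      pow_le_pow_left₀ (by linarith) htβ.le _
    have h2 : β ^ (N ^ (k:ℕ)) = (2:ℝ) ^ ((((N:ℝ)) ^ n)⁻¹ * ((N ^ (k:ℕ) : ℕ) : ℝ)) := by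
      rw [hβdef, ← Real.rpow_natCast ((2:ℝ) ^ ((((N:ℝ)) ^ n)⁻¹)) (N ^ (k:ℕ)),
        ← Real.rpow_mul (by norm_num)]
    have h3 : (((N:ℝ)) ^ n)⁻¹ * ((N ^ (k:ℕ) : ℕ) : ℝ) ≤ 1 := by
      rw [inv_mul_le_iff₀ (by positivity), mul_one]
      have : ((N:ℝ)) ^ ((k:ℕ)) ≤ ((N:ℝ)) ^ n :=
        pow_le_pow_right₀ (by exact_mod_cast hN1) (le_of_lt k.isLt)
      push_cast
      linarith
    have h4 : (2:ℝ) ^ ((((N:ℝ)) ^ n)⁻¹ * ((N ^ (k:ℕ) : ℕ) : ℝ)) ≤ (2:ℝ) ^ (1:ℝ) :=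
      Real.rpow_le_rpow_of_exponent_le one_le_two h3
    rw [Real.rpow_one] at h4
    calc t ^ (N ^ (k:ℕ)) ≤ β ^ (N ^ (k:ℕ)) := h1
      _ = _ := h2
      _ ≤ 2 := h4
  -- the point x
  set x : Fin n → L := fun k => c₀ * u ^ (N ^ (k:ℕ)) with hxdef
  have hρ : ∀ k, ‖x k‖ = r₀ * t ^ (N ^ (k:ℕ)) := by
    intro k
    rw [hxdef]
    simp [norm_mul, norm_pow, hr₀, htdef]
  have hρlow : ∀ k, r₀ ≤ ‖x k‖ := by
    intro k
    rw [hρ k]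
    have : (1:ℝ) ≤ t ^ (N ^ (k:ℕ)) := one_le_pow₀ ht1.le
    nlinarith
  have hρhi : ∀ k, ‖x k‖ ≤ 2 * r₀ := by
    intro k
    rw [hρ k]
    have := htpow k
    nlinarith [ht0, pow_pos ht0 (N ^ (k:ℕ))]
  -- exact value of term norms
  have hterm_eq : ∀ ι, ‖(∏ k, x k ^ ι k) • f ι‖
      = ‖f ι‖ * r₀ ^ (∑ k, ι k) * t ^ (e ι) := by
    intro ι
    rw [hnorm]
    have hvx : (∏ k, ‖x k‖ ^ ι k) = r₀ ^ (∑ k, ι k) * t ^ (e ι) := by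
      calc (∏ k, ‖x k‖ ^ ι k) = ∏ k, (r₀ ^ ι k * t ^ (ι k * N ^ (k:ℕ))) := by
            refine Finset.prod_congr rfl (fun k _ => ?_)
            rw [hρ k, mul_pow, ← pow_mul, mul_comm (N ^ (k:ℕ)) (ι k)]
        _ = (∏ k, r₀ ^ ι k) * ∏ k, t ^ (ι k * N ^ (k:ℕ)) := Finset.prod_mul_distrib
        _ = r₀ ^ (∑ k, ι k) * t ^ (∑ k, ι k * N ^ (k:ℕ)) := by
            rw [Finset.prod_pow_eq_pow_sum, Finset.prod_pow_eq_pow_sum]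
        _ = r₀ ^ (∑ k, ι k) * t ^ (e ι) := rfl
    rw [hvx]
    ring
  -- bounds
  have hterm_le : ∀ ι, ‖(∏ k, x k ^ ι k) • f ι‖ ≤ ‖f ι‖ * (2*r₀) ^ (∑ k, ι k) := by
    intro ι
    rw [hnorm, mul_comm]
    gcongr
    calc (∏ k, ‖x k‖ ^ ι k) ≤ ∏ k, (2*r₀) ^ ι k := by
          refine Finset.prod_le_prod (fun k _ => by positivity) (fun k _ => ?_)
          exact pow_le_pow_left₀ (norm_nonneg _) (hρhi k) _
      _ = (2*r₀) ^ (∑ k, ι k) := Finset.prod_pow_eq_pow_sum _ _ _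
  have hterm_ι₀ : B₀ ≤ ‖(∏ k, x k ^ ι₀ k) • f ι₀‖ := by
    rw [hterm_eq]
    have h1 : (1:ℝ) ≤ t ^ (e ι₀) := one_le_pow₀ ht1.le
    have h2 : 0 < ‖f ι₀‖ * r₀ ^ d := mul_pos hf0 (pow_pos hr₀0 _)
    rw [hB₀def]
    nlinarith
  -- argmax
  obtain ⟨ιs, hιsS, hmax⟩ := S.exists_max_image
    (fun ι => ‖(∏ k, x k ^ ι k) • f ι‖) ⟨ι₀, hι₀S⟩
  have hvs : B₀ ≤ ‖(∏ k, x k ^ ιs k) • f ιs‖ :=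
    le_trans hterm_ι₀ (hmax ι₀ hι₀S)
  have hvs0 : 0 < ‖(∏ k, x k ^ ιs k) • f ιs‖ := lt_of_lt_of_le hB₀ hvs
  -- strict inequality on S \ {ιs}
  have hstrict : ∀ ι ∈ S, ι ≠ ιs →
      ‖(∏ k, x k ^ ι k) • f ι‖ < ‖(∏ k, x k ^ ιs k) • f ιs‖ := by
    intro ι hιS hne
    rcases lt_or_eq_of_le (hmax ι hιS) with h | h
    · exact h
    · exfalso
      apply htT
      rw [hTdef]
      refine Set.mem_biUnion hιS (Set.mem_biUnion hιsS ?_)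
      refine ⟨ht0, hne, ?_⟩
      rw [← hterm_eq, ← hterm_eq]
      exact h
  -- uniform bound on the other terms
  set w : (Fin n → ℕ) → NNReal := fun ι => ‖(∏ k, x k ^ ι k) • f ι‖₊ with hwdef
  set b₁ : NNReal := (S.erase ιs).sup w with hb₁def
  have hwcoe : ∀ ι, (w ι : ℝ) = ‖(∏ k, x k ^ ι k) • f ι‖ := fun ι => coe_nnnorm _
  have hb₁lt : (b₁ : ℝ) < ‖(∏ k, x k ^ ιs k) • f ιs‖ := by
    have hbot : (⊥ : NNReal) < w ιs := by
      rw [bot_eq_zero, ← NNReal.coe_lt_coe, NNReal.coe_zero, hwcoe]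
      exact hvs0
    have hlt : b₁ < w ιs := by
      rw [hb₁def, Finset.sup_lt_iff hbot]
      intro ι hι
      rw [Finset.mem_erase] at hι
      rw [← NNReal.coe_lt_coe, hwcoe, hwcoe]
      exact hstrict ι hι.2 hι.1
    rw [← NNReal.coe_lt_coe, hwcoe] at hlt
    exact hlt
  set b : ℝ := max (B₀/2) (b₁ : ℝ) with hbdef
  have hb0 : 0 ≤ b := le_trans (by positivity) (le_max_left _ _)
  have hblt : b < ‖(∏ k, x k ^ ιs k) • f ιs‖ := by
    apply max_lt _ hb₁lt
    linarith
  -- the tail bound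
  have key := Summable.tsum_eq_add_tsum_ite (hsum x) ιs
  set rest : B := ∑' ι : Fin n → ℕ,
      (if ι = ιs then 0 else (∏ k, x k ^ ι k) • f ι) with hrestdef
  have hrest : ‖rest‖ ≤ b := by
    rw [hrestdef]
    refine norm_tsum_le_of_forall_le_of_nonneg hb0 (fun ι => ?_)
    by_cases hι : ι = ιs
    · simp [hι, hb0]
    · rw [if_neg hι]
      by_cases hιS : ι ∈ S
      · have hmem : ι ∈ S.erase ιs := Finset.mem_erase.mpr ⟨hι, hιS⟩
        have h1 : w ι ≤ b₁ := Finset.le_sup hmem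
        rw [← NNReal.coe_le_coe, hwcoe] at h1
        exact le_trans h1 (le_max_right _ _)
      · rw [hmemS, not_le] at hιS
        have := hterm_le ι
        have h2 : ‖(∏ k, x k ^ ι k) • f ι‖ ≤ B₀/2 := le_trans this hιS.le
        exact le_trans h2 (le_max_left _ _)
  -- conclusion
  have hsplit : (∏ k, x k ^ ιs k) • f ιs
      = (∑' ι : Fin n → ℕ, (∏ k, x k ^ ι k) • f ι) - rest := by
    rw [key, hrestdef]; abel
  have hfinal : ‖(∏ k, x k ^ ιs k) • f ιs‖
      ≤ max ‖∑' ι : Fin n → ℕ, (∏ k, x k ^ ι k) • f ι‖ ‖rest‖ := by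
    rw [hsplit, sub_eq_add_neg]
    refine le_trans (norm_add_le_max _ _) ?_
    rw [norm_neg]
  have hcontra : ‖(∏ k, x k ^ ιs k) • f ιs‖ ≤ max M b :=
    le_trans hfinal (max_le_max (hbd x) hrest)
  have : max M b < ‖(∏ k, x k ^ ιs k) • f ιs‖ :=
    max_lt (lt_of_lt_of_le hB₀M hvs) hblt
  exact absurd hcontra (not_le.mpr this)
end

section
/- The ideal 𝒫 is a prime ideal of B[X_i : i ∈ ℤ]; equivalently, the quotient ring B[X_i : i ∈ ℤ]/𝒫 is an integral domain. -/
/-- The ideal generated by the elements `X i ^ q + Θ * X i - X (i-1)` (i ∈ ℤ) in the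
polynomial ring over an integral domain `B` in the variables `X i`, `i ∈ ℤ`. -/
noncomputable def carlitzIdeal (B : Type*) [CommRing B] (q : ℕ) (Θ : B) : Ideal (MvPolynomial ℤ B) :=
  Ideal.span (Set.range fun i : ℤ =>
    MvPolynomial.X i ^ q + MvPolynomial.C Θ * MvPolynomial.X i - MvPolynomial.X (i - 1))

/-!
Let `g = X^q + Θ X ∈ B[X]` and `g⁽ⁿ⁾` its `n`-th compositional iterate. For each `J ∈ ℤ` the
substitution `X_i ↦ g⁽ᴶ⁻ⁱ⁾(X)` kills the generators of `𝒫` with index `≤ J`, and modulo `𝒫` every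
polynomial in the variables `X_i`, `i ≤ J`, is congruent to a polynomial in `X_J` alone, namely to
its image under this substitution. Since `g⁽ⁿ⁾` is nonconstant, raising `J` only composes that
image with some `g⁽ⁿ⁾`, which does not change whether it vanishes. Hence a polynomial in the
`X_i`, `i ≤ J`, lies in `𝒫` iff its image in the domain `B[X]` is zero, and `𝒫` is prime.
-/

theorem MvPolynomial.aeval_congr_vars {R S σ : Type*} [CommSemiring R] [CommSemiring S]
    [Algebra R S] {g₁ g₂ : σ → S} {P : MvPolynomial σ R} (h : ∀ i ∈ P.vars, g₁ i = g₂ i) :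
    MvPolynomial.aeval g₁ P = MvPolynomial.aeval g₂ P :=
  MvPolynomial.eval₂Hom_congr' rfl (fun i hi _ => h i hi) rfl

namespace Carlitz

open Polynomial

variable {B : Type*} [CommRing B] (q : ℕ) (Θ : B)

noncomputable def poly : B[X] := X ^ q + C Θ * X

noncomputable def iter : ℕ → B[X]
  | 0 => X
  | n + 1 => (poly q Θ).comp (iter n)

theorem iter_add (m n : ℕ) : iter q Θ (m + n) = (iter q Θ m).comp (iter q Θ n) := by
  induction m with
  | zero => simp [iter]
  | succ m ih => rw [Nat.add_right_comm, iter, ih, iter, comp_assoc]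

theorem natDegree_poly [Nontrivial B] (hq : 2 ≤ q) : (poly q Θ).natDegree = q := by
  have hlin : (C Θ * X).natDegree < (X ^ q : B[X]).natDegree := by
    rw [natDegree_X_pow]
    exact ((natDegree_C_mul_le Θ X).trans natDegree_X_le).trans_lt (by omega)
  rw [poly, natDegree_add_eq_left_of_natDegree_lt hlin, natDegree_X_pow]

theorem natDegree_iter [IsDomain B] (hq : 2 ≤ q) (n : ℕ) : (iter q Θ n).natDegree = q ^ n := by
  induction n with
  | zero => simp [iter]
  | succ n ih => rw [iter, natDegree_comp, natDegree_poly q Θ hq, ih, pow_succ']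

theorem comp_iter_eq_zero_iff [IsDomain B] (hq : 2 ≤ q) {f : B[X]} (n : ℕ) :
    f.comp (iter q Θ n) = 0 ↔ f = 0 := by
  refine ⟨fun h => (comp_eq_zero_iff.1 h).resolve_right fun ⟨_, hconst⟩ => ?_, fun h => by
    rw [h, zero_comp]⟩
  have := natDegree_iter q Θ hq n
  rw [hconst, natDegree_C] at this
  exact absurd this.symm (pow_ne_zero n (by omega))

/-- The substitution `X_i ↦ g⁽ᴶ⁻ⁱ⁾(X)`; the values at `i > J` (truncated to `g⁽⁰⁾ = X`) are never
used. -/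
noncomputable def toPolynomial (J : ℤ) : MvPolynomial ℤ B →ₐ[B] B[X] :=
  MvPolynomial.aeval fun i => iter q Θ (J - i).toNat

theorem toPolynomial_generator {i J : ℤ} (h : i ≤ J) :
    toPolynomial q Θ J (MvPolynomial.X i ^ q + MvPolynomial.C Θ * MvPolynomial.X i
      - MvPolynomial.X (i - 1)) = 0 := by
  have hi : (J - (i - 1)).toNat = (J - i).toNat + 1 := by omega
  simp [toPolynomial, hi, iter, poly]

theorem eventually_toPolynomial_eq_zero {P : MvPolynomial ℤ B} (hP : P ∈ carlitzIdeal B q Θ) :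
    ∀ᶠ J in Filter.atTop, toPolynomial q Θ J P = 0 := by
  induction hP using Submodule.span_induction with
  | mem x hx =>
    obtain ⟨i, rfl⟩ := hx
    filter_upwards [Filter.eventually_ge_atTop i] with J hJ
    exact toPolynomial_generator q Θ hJ
  | zero => simp
  | add x y _ _ hx hy =>
    filter_upwards [hx, hy] with J hx hy
    rw [map_add, hx, hy, add_zero]
  | smul a x _ hx =>
    filter_upwards [hx] with J hx
    rw [smul_eq_mul, map_mul, hx, mul_zero]

theorem toPolynomial_of_vars_le {P : MvPolynomial ℤ B} {j J : ℤ} (hP : ∀ i ∈ P.vars, i ≤ j)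
    (hjJ : j ≤ J) :
    toPolynomial q Θ J P = (toPolynomial q Θ j P).comp (iter q Θ (J - j).toNat) := by
  rw [comp_eq_aeval, toPolynomial, toPolynomial, MvPolynomial.comp_aeval_apply]
  refine MvPolynomial.aeval_congr_vars fun i hi => ?_
  have hsum : (J - i).toNat = (j - i).toNat + (J - j).toNat := by have := hP i hi; omega
  rw [← comp_eq_aeval, ← iter_add, hsum]

theorem mk_X_sub (j : ℤ) (n : ℕ) :
    Ideal.Quotient.mk (carlitzIdeal B q Θ) (MvPolynomial.X (j - n))
      = aeval (Ideal.Quotient.mk (carlitzIdeal B q Θ) (MvPolynomial.X j)) (iter q Θ n) := by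
  induction n with
  | zero => simp [iter]
  | succ n ih =>
    have hgen : MvPolynomial.X (j - n) ^ q + MvPolynomial.C Θ * MvPolynomial.X (j - n)
        - MvPolynomial.X (j - n - 1) ∈ carlitzIdeal B q Θ :=
      Ideal.subset_span ⟨j - n, rfl⟩
    rw [← Ideal.Quotient.eq_zero_iff_mem, map_sub, sub_eq_zero] at hgen
    rw [Nat.cast_succ, ← sub_sub, ← hgen, iter, aeval_comp, ← ih]
    simp only [poly, map_add, map_pow, map_mul, aeval_X, aeval_C, add_right_inj]
    rfl

theorem mk_eq_aeval_toPolynomial {P : MvPolynomial ℤ B} {j : ℤ} (hP : ∀ i ∈ P.vars, i ≤ j) :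
    Ideal.Quotient.mk (carlitzIdeal B q Θ) P
      = aeval (Ideal.Quotient.mk (carlitzIdeal B q Θ) (MvPolynomial.X j))
          (toPolynomial q Θ j P) := by
  rw [toPolynomial, MvPolynomial.comp_aeval_apply, ← Ideal.Quotient.mkₐ_eq_mk B,
    ← MvPolynomial.aeval_X_left_apply P, MvPolynomial.comp_aeval_apply,
    MvPolynomial.aeval_X_left_apply]
  refine MvPolynomial.aeval_congr_vars fun i hi => ?_
  have hi : j - ((j - i).toNat : ℤ) = i := by have := hP i hi; omega
  rw [Ideal.Quotient.mkₐ_eq_mk, ← mk_X_sub, hi]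

theorem mem_carlitzIdeal_iff [IsDomain B] (hq : 2 ≤ q) {P : MvPolynomial ℤ B} {j : ℤ}
    (hP : ∀ i ∈ P.vars, i ≤ j) : P ∈ carlitzIdeal B q Θ ↔ toPolynomial q Θ j P = 0 := by
  constructor
  · intro hmem
    obtain ⟨J, hzero, hJ⟩ :=
      ((eventually_toPolynomial_eq_zero q Θ hmem).and (Filter.eventually_ge_atTop j)).exists
    rwa [toPolynomial_of_vars_le q Θ hP hJ, comp_iter_eq_zero_iff q Θ hq] at hzero
  · intro hzero
    rw [← Ideal.Quotient.eq_zero_iff_mem, mk_eq_aeval_toPolynomial q Θ hP, hzero, map_zero]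

end Carlitz

/-- The ideal `𝒫` is prime; equivalently, the quotient ring is an integral domain. -/
theorem stmt_2 {B : Type*} [CommRing B] [IsDomain B]
    (p q e : ℕ) (hp : p.Prime) (he : 0 < e) (hq : q = p ^ e) (Θ : B) :
    (carlitzIdeal B q Θ).IsPrime := by
  classical
  have hq2 : 2 ≤ q := hq ▸ hp.two_le.trans (Nat.le_self_pow he.ne' p)
  refine ⟨fun htop => ?_, fun {a b} hab => ?_⟩
  · have hone := (Ideal.eq_top_iff_one _).1 htop
    rw [Carlitz.mem_carlitzIdeal_iff q Θ hq2 (j := 0) (by simp)] at hone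
    simp at hone
  · obtain ⟨j, hj⟩ := (a.vars ∪ b.vars).exists_le
    have ha : ∀ i ∈ a.vars, i ≤ j := fun i hi => hj i (Finset.mem_union_left _ hi)
    have hb : ∀ i ∈ b.vars, i ≤ j := fun i hi => hj i (Finset.mem_union_right _ hi)
    have hab' : ∀ i ∈ (a * b).vars, i ≤ j := fun i hi => hj i (MvPolynomial.vars_mul a b hi)
    rw [Carlitz.mem_carlitzIdeal_iff q Θ hq2 hab', map_mul, mul_eq_zero] at hab
    rwa [Carlitz.mem_carlitzIdeal_iff q Θ hq2 ha, Carlitz.mem_carlitzIdeal_iff q Θ hq2 hb]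
end

section
/- Normal form in the quotient ring: the quotient B[X_i : i ∈ ℤ]/𝒫 is a free B-module, and a basis is given by the residue classes of the reduced monomials ∏_{i∈ℤ} X_i^{j_i}, where j : ℤ → {0, 1, …, q−1} ranges over the finitely supported functions. In particular, every element of the quotient has a unique representative which is a B-linear combination of monomials in which every variable X_i occurs with exponent at most q−1. -/
open scoped Polynomial

theorem Nat.eq_of_sum_range_mul_pow_eq {b M : ℕ} {a c : ℕ → ℕ} (ha : ∀ k, a k < b)
    (hc : ∀ k, c k < b)
    (h : ∑ k ∈ Finset.range M, a k * b ^ k = ∑ k ∈ Finset.range M, c k * b ^ k) :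
    ∀ k < M, a k = c k := by
  induction M generalizing a c with
  | zero => simp
  | succ M ih =>
    simp only [Finset.sum_range_succ', pow_succ, ← mul_assoc, ← Finset.sum_mul, pow_zero,
      mul_one] at h
    have h₀ : a 0 = c 0 := by
      simpa [Nat.mul_add_mod, Nat.mod_eq_of_lt (ha 0), Nat.mod_eq_of_lt (hc 0)] using
        congr_arg (· % b) h
    rw [h₀, add_left_inj] at h
    have htail := ih (fun k => ha (k + 1)) (fun k => hc (k + 1))
      (Nat.eq_of_mul_eq_mul_right (Nat.zero_lt_of_lt (ha 0)) h)
    rintro (_ | k) hk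
    · exact h₀
    · exact htail k (by omega)

theorem Function.Surjective.exists_int_seq {α : Type*} {f : α → α} (hf : Function.Surjective f)
    (a : α) (N : ℤ) : ∃ x : ℤ → α, x N = a ∧ ∀ i, f (x i) = x (i - 1) := by
  obtain ⟨g, hg⟩ := hf.hasRightInverse
  refine ⟨fun i => if N ≤ i then g^[(i - N).toNat] a else f^[(N - i).toNat] a, by simp,
    fun i => ?_⟩
  rcases lt_trichotomy i N with h | rfl | h
  · have e : (N - (i - 1)).toNat = (N - i).toNat + 1 := by omega
    simp only [show ¬N ≤ i by omega, show ¬N ≤ i - 1 by omega, if_false, e,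
      Function.iterate_succ_apply']
  · simp
  · have e : (i - N).toNat = (i - 1 - N).toNat + 1 := by omega
    simp only [show N ≤ i by omega, show N ≤ i - 1 by omega, if_true, e,
      Function.iterate_succ_apply', hg _]

theorem Finset.exists_subset_image_sub_range (s : Finset ℤ) :
    ∃ (N : ℤ) (L : ℕ), s ⊆ (Finset.range L).image fun k : ℕ => N - k := by
  refine ⟨(s.sup Int.natAbs : ℕ), 2 * s.sup Int.natAbs + 1, fun i hi => Finset.mem_image.2
    ⟨((s.sup Int.natAbs : ℕ) - i).toNat, Finset.mem_range.2 ?_, ?_⟩⟩ <;>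
  have := Finset.le_sup (f := Int.natAbs) hi <;> omega

namespace Polynomial

theorem linearIndependent_of_monic_of_injective_natDegree {R ι : Type*} [CommRing R]
    {f : ι → R[X]} (hm : ∀ i, (f i).Monic) (hd : Function.Injective fun i => (f i).natDegree) :
    LinearIndependent R f := by
  classical
  rw [linearIndependent_iff']
  intro s c hs i hi
  by_contra hci
  obtain ⟨i₀, hi₀, hmax⟩ := (s.filter (c · ≠ 0)).exists_max_image (fun i => (f i).natDegree)
    ⟨i, Finset.mem_filter.2 ⟨hi, hci⟩⟩
  rw [Finset.mem_filter] at hi₀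
  have hcoeff := congr_arg (coeff · (f i₀).natDegree) hs
  simp only [finsetSum_coeff, coeff_smul, smul_eq_mul, coeff_zero] at hcoeff
  rw [Finset.sum_eq_single i₀ ?_ (absurd hi₀.1), (hm i₀).coeff_natDegree, mul_one] at hcoeff
  · exact hi₀.2 hcoeff
  intro j hj hji
  by_cases hcj : c j = 0
  · rw [hcj, zero_mul]
  · rw [coeff_eq_zero_of_natDegree_lt ((hmax j (Finset.mem_filter.2 ⟨hj, hcj⟩)).lt_of_ne
      (hd.ne hji)), mul_zero]

end Polynomial

section CarlitzPoly

open Polynomial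

variable {R : Type*} [CommRing R] {q : ℕ}

noncomputable def carlitzPoly (q : ℕ) (Θ : R) : R[X] := X ^ q + C Θ * X

theorem carlitzPoly_monic (hq : 2 ≤ q) (Θ : R) : (carlitzPoly q Θ).Monic :=
  monic_X_pow_add ((degree_C_mul_X_le Θ).trans_lt (by exact_mod_cast hq))

theorem natDegree_carlitzPoly [Nontrivial R] (hq : 2 ≤ q) (Θ : R) :
    (carlitzPoly q Θ).natDegree = q := by
  rw [carlitzPoly, natDegree_add_eq_left_of_degree_lt, natDegree_X_pow]
  exact (degree_C_mul_X_le Θ).trans_lt (by rw [degree_X_pow]; exact_mod_cast hq)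

theorem aeval_carlitzPoly {A : Type*} [CommRing A] [Algebra R A] (Θ : R) (y : A) :
    aeval y (carlitzPoly q Θ) = y ^ q + algebraMap R A Θ * y := by
  simp [carlitzPoly]

theorem natDegree_carlitzPoly_iterate_comp [IsDomain R] (hq : 2 ≤ q) (Θ : R) (k : ℕ) :
    ((carlitzPoly q Θ).comp^[k] X).natDegree = q ^ k := by
  rw [natDegree_iterate_comp, natDegree_carlitzPoly hq, natDegree_X, mul_one]

theorem carlitzPoly_iterate_comp_monic [IsDomain R] (hq : 2 ≤ q) (Θ : R) (k : ℕ) :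
    ((carlitzPoly q Θ).comp^[k] X).Monic := by
  induction k with
  | zero => exact monic_X
  | succ k ih =>
    rw [Function.iterate_succ_apply']
    refine (carlitzPoly_monic hq Θ).comp ih ?_
    rw [natDegree_carlitzPoly_iterate_comp hq]
    positivity

theorem aeval_carlitzPoly_iterate_comp {A : Type*} [CommRing A] [Algebra R A] (Θ : R)
    {x : ℤ → A} (hx : ∀ i, aeval (x i) (carlitzPoly q Θ) = x (i - 1)) (N : ℤ) (k : ℕ) :
    aeval (x N) ((carlitzPoly q Θ).comp^[k] X) = x (N - k) := by
  induction k with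
  | zero => simp
  | succ k ih =>
    rw [Function.iterate_succ_apply', aeval_comp, ih, hx]
    push_cast
    ring_nf

end CarlitzPoly

section CarlitzMonomialPoly

open Polynomial

variable {R : Type*} [CommRing R] {q : ℕ}

/-- The monomial `∏ i, X i ^ j i`, for `j` supported on `{N - L + 1, …, N}`, written as a
polynomial in `X N` through `X (N - k) = P^[k] (X N)`, where `P = carlitzPoly q Θ`. -/
noncomputable def carlitzMonomialPoly (q : ℕ) (Θ : R) (N : ℤ) (L : ℕ) (j : ℤ →₀ ℕ) : R[X] :=
  ∏ k ∈ Finset.range L, ((carlitzPoly q Θ).comp^[k] X) ^ j (N - k)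

theorem aeval_carlitzMonomialPoly {A : Type*} [CommRing A] [Algebra R A] (Θ : R) {x : ℤ → A}
    (hx : ∀ i, aeval (x i) (carlitzPoly q Θ) = x (i - 1)) {N : ℤ} {L : ℕ} {j : ℤ →₀ ℕ}
    (hj : j.support ⊆ (Finset.range L).image fun k : ℕ => N - k) :
    aeval (x N) (carlitzMonomialPoly q Θ N L j) = j.prod fun i e => x i ^ e := by
  rw [Finsupp.prod_of_support_subset j hj _ fun _ _ => pow_zero _,
    Finset.prod_image fun _ _ _ _ h => by simpa using h, carlitzMonomialPoly, map_prod]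
  simp_rw [map_pow, aeval_carlitzPoly_iterate_comp Θ hx]

variable [IsDomain R] (Θ : R) (N : ℤ) (L : ℕ)

theorem carlitzMonomialPoly_monic (hq : 2 ≤ q) (j : ℤ →₀ ℕ) :
    (carlitzMonomialPoly q Θ N L j).Monic :=
  monic_prod_of_monic _ _ fun k _ => (carlitzPoly_iterate_comp_monic hq Θ k).pow _

theorem natDegree_carlitzMonomialPoly (hq : 2 ≤ q) (j : ℤ →₀ ℕ) :
    (carlitzMonomialPoly q Θ N L j).natDegree = ∑ k ∈ Finset.range L, j (N - k) * q ^ k := by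
  rw [carlitzMonomialPoly,
    natDegree_prod_of_monic _ _ fun k _ => (carlitzPoly_iterate_comp_monic hq Θ k).pow _]
  simp_rw [natDegree_pow, natDegree_carlitzPoly_iterate_comp hq]

theorem eq_of_natDegree_carlitzMonomialPoly_eq (hq : 2 ≤ q) {j j' : ℤ →₀ ℕ} (hj : ∀ i, j i < q)
    (hj' : ∀ i, j' i < q) (hs : j.support ⊆ (Finset.range L).image fun k : ℕ => N - k)
    (hs' : j'.support ⊆ (Finset.range L).image fun k : ℕ => N - k)
    (h : (carlitzMonomialPoly q Θ N L j).natDegree = (carlitzMonomialPoly q Θ N L j').natDegree) :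
    j = j' := by
  rw [natDegree_carlitzMonomialPoly Θ N L hq, natDegree_carlitzMonomialPoly Θ N L hq] at h
  have hdigits := Nat.eq_of_sum_range_mul_pow_eq (fun k => hj _) (fun k => hj' _) h
  ext i
  by_cases hi : i ∈ (Finset.range L).image fun k : ℕ => N - k
  · obtain ⟨k, hk, rfl⟩ := Finset.mem_image.1 hi
    exact hdigits k (Finset.mem_range.1 hk)
  · rw [Finsupp.notMem_support_iff.1 fun h => hi (hs h),
      Finsupp.notMem_support_iff.1 fun h => hi (hs' h)]

end CarlitzMonomialPoly

theorem exists_transcendental_carlitz_seq {B : Type*} [CommRing B] [IsDomain B] {q : ℕ}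
    (hq : 2 ≤ q) (Θ : B) (N : ℤ) :
    ∃ x : ℤ → AlgebraicClosure (FractionRing B[X]), Transcendental B (x N) ∧
      ∀ i, Polynomial.aeval (x i) (carlitzPoly q Θ) = x (i - 1) := by
  let K := FractionRing B[X]
  let F := AlgebraicClosure K
  have ht : Transcendental B (algebraMap K F (algebraMap B[X] K Polynomial.X)) :=
    (transcendental_algebraMap_iff (algebraMap K F).injective).2 <|
      (transcendental_algebraMap_iff (IsFractionRing.injective B[X] K)).2 <|
        Polynomial.transcendental_X B
  have hsurj : Function.Surjective fun y : F => Polynomial.aeval y (carlitzPoly q Θ) := by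
    simp_rw [Polynomial.aeval_def, Polynomial.eval₂_eq_eval_map]
    exact IsAlgClosed.eval_surjective (by
      rw [(carlitzPoly_monic hq Θ).natDegree_map, natDegree_carlitzPoly hq]; omega)
  obtain ⟨x, hxN, hx⟩ := hsurj.exists_int_seq _ N
  exact ⟨x, hxN ▸ ht, hx⟩

section CarlitzQuotient

open MvPolynomial

variable {B : Type*} [CommRing B] {q : ℕ} {Θ : B}

theorem aeval_eq_zero_of_mem_carlitzIdeal {A : Type*} [CommRing A] [Algebra B A] {x : ℤ → A}
    (hx : ∀ i, Polynomial.aeval (x i) (carlitzPoly q Θ) = x (i - 1)) {f : MvPolynomial ℤ B}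
    (hf : f ∈ carlitzIdeal B q Θ) : aeval x f = 0 := by
  refine RingHom.mem_ker.1 (Ideal.span_le.2 ?_ hf)
  rintro _ ⟨i, rfl⟩
  simp [← hx i, aeval_carlitzPoly]

theorem linearIndependent_mk_monomial [IsDomain B] (hq : 2 ≤ q) (Θ : B) :
    LinearIndependent B fun j : {j : ℤ →₀ ℕ // ∀ i, j i < q} =>
      Ideal.Quotient.mk (carlitzIdeal B q Θ) (monomial j.1 (1 : B)) := by
  rw [linearIndependent_iff_finset_linearIndependent]
  intro s
  obtain ⟨N, L, hNL⟩ := (s.biUnion fun j => j.1.support).exists_subset_image_sub_range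
  have hs : ∀ j ∈ s, j.1.support ⊆ (Finset.range L).image fun k : ℕ => N - k :=
    fun j hj => (Finset.subset_biUnion_of_mem _ hj).trans hNL
  obtain ⟨x, htrans, hx⟩ := exists_transcendental_carlitz_seq hq Θ N
  obtain ⟨ψ, hψ⟩ : ∃ ψ : (MvPolynomial ℤ B ⧸ carlitzIdeal B q Θ) →ₐ[B] _,
      ∀ f, ψ (Ideal.Quotient.mk _ f) = aeval x f :=
    ⟨Ideal.Quotient.liftₐ _ (aeval x) fun _ => aeval_eq_zero_of_mem_carlitzIdeal hx,
      fun f => by rw [Ideal.Quotient.liftₐ_apply]; exact Ideal.Quotient.lift_mk _ _ _⟩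
  have hpoly : LinearIndependent B fun j : s => carlitzMonomialPoly q Θ N L j.1.1 :=
    Polynomial.linearIndependent_of_monic_of_injective_natDegree
      (fun j => carlitzMonomialPoly_monic Θ N L hq _) fun j j' h =>
        Subtype.ext <| Subtype.ext <| eq_of_natDegree_carlitzMonomialPoly_eq Θ N L hq j.1.2 j'.1.2
          (hs j j.2) (hs j' j'.2) h
  have hψpoly (j : s) : ψ (Ideal.Quotient.mk _ (monomial j.1.1 1)) =
      Polynomial.aeval (x N) (carlitzMonomialPoly q Θ N L j.1.1) := by
    rw [hψ, aeval_monomial, map_one, one_mul, aeval_carlitzMonomialPoly Θ hx (hs j j.2)]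
  refine .of_comp ψ.toLinearMap ?_
  simpa only [Function.comp_def, AlgHom.toLinearMap_apply, hψpoly] using
    hpoly.map' (Polynomial.aeval (x N)).toLinearMap
      (LinearMap.ker_eq_bot.2 (transcendental_iff_injective.1 htrans))

theorem mk_monomial_eq_of_single_le {d : ℤ →₀ ℕ} {i : ℤ} (h : Finsupp.single i q ≤ d) :
    Ideal.Quotient.mk (carlitzIdeal B q Θ) (monomial d 1) =
      Ideal.Quotient.mk _ (monomial (d - Finsupp.single i q + Finsupp.single (i - 1) 1) 1) -
        Θ • Ideal.Quotient.mk _ (monomial (d - Finsupp.single i q + Finsupp.single i 1) 1) := by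
  have hX : Ideal.Quotient.mk (carlitzIdeal B q Θ) (X i ^ q) =
      Ideal.Quotient.mk _ (X (i - 1) - C Θ * X i) := by
    have hgen : X i ^ q + C Θ * X i - X (i - 1) ∈ carlitzIdeal B q Θ :=
      Ideal.subset_span ⟨i, rfl⟩
    refine Ideal.Quotient.eq.2 ?_
    convert hgen using 1
    ring
  conv_lhs => rw [← tsub_add_cancel_of_le h]
  rw [monomial_add_single, map_mul, hX, ← map_mul, monomial_add_single, monomial_add_single,
    ← Ideal.Quotient.mkₐ_eq_mk B, ← map_smul, ← map_sub, smul_eq_C_mul]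
  congr 1
  ring

theorem mk_monomial_mem_span_reduced (hq : 2 ≤ q) (d : ℤ →₀ ℕ) :
    Ideal.Quotient.mk (carlitzIdeal B q Θ) (monomial d 1) ∈
      Submodule.span B (Set.range fun j : {j : ℤ →₀ ℕ // ∀ i, j i < q} =>
        Ideal.Quotient.mk (carlitzIdeal B q Θ) (monomial j.1 (1 : B))) := by
  induction hn : d.degree using Nat.strong_induction_on generalizing d with
  | _ n ih =>
    by_cases hred : ∀ i, d i < q
    · exact Submodule.subset_span ⟨⟨d, hred⟩, rfl⟩
    push Not at hred
    obtain ⟨i, hi⟩ := hred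
    have hle : Finsupp.single i q ≤ d := Finsupp.single_le_iff.2 hi
    have hlt (k : ℤ) : (d - Finsupp.single i q + Finsupp.single k 1).degree < n := by
      have := congr_arg Finsupp.degree (tsub_add_cancel_of_le hle)
      simp only [map_add, Finsupp.degree_single] at this ⊢
      omega
    rw [mk_monomial_eq_of_single_le hle]
    exact Submodule.sub_mem _ (ih _ (hlt _) _ rfl) (Submodule.smul_mem _ _ (ih _ (hlt _) _ rfl))

theorem span_mk_monomial_reduced_eq_top (hq : 2 ≤ q) :
    Submodule.span B (Set.range fun j : {j : ℤ →₀ ℕ // ∀ i, j i < q} =>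
      Ideal.Quotient.mk (carlitzIdeal B q Θ) (monomial j.1 (1 : B))) = ⊤ := by
  refine Submodule.eq_top_iff'.2 fun y => ?_
  obtain ⟨f, rfl⟩ := Ideal.Quotient.mk_surjective y
  induction f using MvPolynomial.induction_on' with
  | monomial d b =>
    rw [← mul_one b, ← smul_eq_mul, ← smul_monomial, ← Ideal.Quotient.mkₐ_eq_mk B, map_smul]
    exact Submodule.smul_mem _ _ (mk_monomial_mem_span_reduced hq d)
  | add f g hf hg =>
    exact map_add (Ideal.Quotient.mk (carlitzIdeal B q Θ)) f g ▸ Submodule.add_mem _ hf hg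

end CarlitzQuotient

/-- Normal form in the quotient ring: the quotient is a free `B`-module with basis given
by the residue classes of the reduced monomials `∏ i, X i ^ j i`, where `j : ℤ →₀ ℕ`
ranges over the finitely supported functions with values in `{0, 1, …, q-1}`. -/
theorem stmt_3 {B : Type*} [CommRing B] [IsDomain B]
    (p q e : ℕ) (hp : p.Prime) (he : 0 < e) (hq : q = p ^ e) (Θ : B) :
    ∃ b : Module.Basis {j : ℤ →₀ ℕ // ∀ i, j i < q} B
        (MvPolynomial ℤ B ⧸ carlitzIdeal B q Θ),
      ∀ j, b j = Ideal.Quotient.mk (carlitzIdeal B q Θ)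
        (MvPolynomial.monomial j.1 (1 : B)) := by
  have hq2 : 2 ≤ q := hq ▸ hp.two_le.trans (Nat.le_self_pow he.ne' p)
  exact ⟨.mk (linearIndependent_mk_monomial hq2 Θ) (span_mk_monomial_reduced_eq_top hq2).ge,
    fun j => Module.Basis.mk_apply _ _ j⟩
end

section
/- In the quotient ring B[X_i : i ∈ ℤ]/𝒫 the following identity holds for every n ≥ 1: (X₁X₂⋯Xₙ)^{q−1}·Xₙ = X₀ − Θ·Σ_{i=0}^{n−1} (X₁⋯X_i)^{q−1}·X_{i+1}, where all X_j denote residue classes modulo 𝒫 and the product X₁⋯X_i for i = 0 is the empty product 1. -/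
open Finset

theorem prod_Icc_pow_pred_mul_eq_sub_sum {R : Type*} [CommRing R] {q : ℕ} {Θ : R}
    {x : ℤ → R} (hq : 1 ≤ q) (hx : ∀ i, x i ^ q + Θ * x i = x (i - 1)) (n : ℕ) :
    (∏ i ∈ Icc 1 n, x i) ^ (q - 1) * x n =
      x 0 - Θ * ∑ i ∈ range n, (∏ k ∈ Icc 1 i, x k) ^ (q - 1) * x (i + 1) := by
  induction n with
  | zero => simp
  | succ n ih =>
    have hlast : x (n + 1) ^ q = x n - Θ * x (n + 1) := by
      have h := hx (n + 1)
      rw [add_sub_cancel_right] at h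
      linear_combination h
    rw [prod_Icc_succ_top (by omega), sum_range_succ, mul_add, ← sub_sub, ← ih]
    push_cast
    calc ((∏ i ∈ Icc 1 n, x i) * x (n + 1)) ^ (q - 1) * x (n + 1)
        = (∏ i ∈ Icc 1 n, x i) ^ (q - 1) * x (n + 1) ^ (q - 1 + 1) := by ring
      _ = _ := by rw [Nat.sub_add_cancel hq, hlast]; ring

theorem carlitzIdeal_mk_X_pow_add {B : Type*} [CommRing B] (q : ℕ) (Θ : B) (i : ℤ) :
    Ideal.Quotient.mk (carlitzIdeal B q Θ) (MvPolynomial.X i) ^ q +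
        Ideal.Quotient.mk (carlitzIdeal B q Θ) (MvPolynomial.C Θ) *
          Ideal.Quotient.mk (carlitzIdeal B q Θ) (MvPolynomial.X i) =
      Ideal.Quotient.mk (carlitzIdeal B q Θ) (MvPolynomial.X (i - 1)) := by
  rw [← map_pow, ← map_mul, ← map_add, Ideal.Quotient.eq]
  exact Ideal.subset_span ⟨i, rfl⟩

theorem stmt_4_general {B : Type*} [CommRing B]
    (p q e : ℕ) (hp : p.Prime) (hq : q = p ^ e) (Θ : B)
    (n : ℕ) :
    Ideal.Quotient.mk (carlitzIdeal B q Θ)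
        ((∏ i ∈ Finset.Icc 1 n, MvPolynomial.X (i : ℤ)) ^ (q - 1) *
          MvPolynomial.X (n : ℤ)) =
      Ideal.Quotient.mk (carlitzIdeal B q Θ)
        (MvPolynomial.X (0 : ℤ) - MvPolynomial.C Θ *
          ∑ i ∈ Finset.range n,
            (∏ k ∈ Finset.Icc 1 i, MvPolynomial.X (k : ℤ)) ^ (q - 1) *
              MvPolynomial.X ((i : ℤ) + 1)) := by
  have hq1 : 1 ≤ q := hq ▸ Nat.one_le_pow _ _ hp.pos
  simp only [map_mul, map_pow, map_prod, map_sub, map_sum]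
  exact prod_Icc_pow_pred_mul_eq_sub_sum hq1 (carlitzIdeal_mk_X_pow_add q Θ) n

/-- In the quotient ring the identity
`(X₁⋯Xₙ)^(q-1)·Xₙ = X₀ − Θ·∑_{i=0}^{n-1} (X₁⋯X_i)^(q-1)·X_{i+1}` holds for every `n ≥ 1`. -/
theorem stmt_4 {B : Type*} [CommRing B] [IsDomain B]
    (p q e : ℕ) (hp : p.Prime) (he : 0 < e) (hq : q = p ^ e) (Θ : B)
    (n : ℕ) (hn : 1 ≤ n) :
    Ideal.Quotient.mk (carlitzIdeal B q Θ)
        ((∏ i ∈ Finset.Icc 1 n, MvPolynomial.X (i : ℤ)) ^ (q - 1) *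
          MvPolynomial.X (n : ℤ)) =
      Ideal.Quotient.mk (carlitzIdeal B q Θ)
        (MvPolynomial.X (0 : ℤ) - MvPolynomial.C Θ *
          ∑ i ∈ Finset.range n,
            (∏ k ∈ Finset.Icc 1 i, MvPolynomial.X (k : ℤ)) ^ (q - 1) *
              MvPolynomial.X ((i : ℤ) + 1)) :=
  stmt_4_general p q e hp hq Θ n
end

section
/- Partial-fraction identity over 𝔽_q: Σ_{(μ,ν)∈𝔽_q×𝔽_q, μ≠ν} [∏_{i∈U}(x_i+μ) · ∏_{j∈V}(x_j+ν)] / [(z+μ)(z+ν)] = − Σ_{(I,J)} Σ_{μ∈𝔽_q} [∏_{k∈I}(x_k+μ)] / (z+μ), where the outer sum on the right-hand side runs over all pairs (I,J) of disjoint subsets of Σ with I ∪ J = Σ such that |J| ≡ 1 (mod q−1) and (J ⊆ U or J ⊆ V). -/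
/-!
Write `P_W(μ) = ∏_{i ∈ W} (x_i + μ)`. The partial fraction decomposition
`1/((z+μ)(z+ν)) = (1/(z+μ) - 1/(z+ν))/(ν-μ)` turns the left side into
`Σ_μ (z+μ)⁻¹ Σ_{ν ≠ μ} (P_U(μ) P_V(ν) + P_U(ν) P_V(μ))/(ν-μ)`.
Substituting `ν = μ + u` and expanding `P_W(μ+u) = Σ_{J ⊆ W} u^|J| ∏_{i ∈ W \ J} (x_i + μ)`,
the inner sum `Σ_{ν ≠ μ} P_W(ν)/(ν-μ)` only sees the power sums `Σ_{u ≠ 0} u^(|J|-1)`, which are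
`-1` when `|J| ≡ 1 (mod q-1)` and `0` otherwise. As `q > 2`, the empty set never qualifies, so no
`J` is counted both as a subset of `U` and of `V`.
-/

open Finset

namespace Finset

section OffDiag

variable {α : Type*}

theorem sum_offDiag_swap {M : Type*} [AddCommMonoid M] (s : Finset α) (g : α × α → M) :
    ∑ p ∈ s.offDiag, g p.swap = ∑ p ∈ s.offDiag, g p :=
  sum_equiv (Equiv.prodComm α α) (by simp [ne_comm, and_left_comm]) (fun _ _ => rfl)

variable [DecidableEq α]

theorem sum_offDiag_eq_sum_sum_erase {M : Type*} [AddCommMonoid M] (s : Finset α)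
    (g : α × α → M) :
    ∑ p ∈ s.offDiag, g p = ∑ μ ∈ s, ∑ ν ∈ s.erase μ, g (μ, ν) :=
  sum_finset_product _ _ _ fun p => by simp [ne_comm, and_comm]

theorem sum_offDiag_div_mul_eq_sum_sum_erase {K : Type*} [Field K] (s : Finset α) (a : α → K)
    (ha : Set.InjOn a s) (z : K) (hz : ∀ μ ∈ s, z + a μ ≠ 0) (f : α × α → K) :
    ∑ p ∈ s.offDiag, f p / ((z + a p.1) * (z + a p.2)) =
      ∑ μ ∈ s, (∑ ν ∈ s.erase μ, (f (μ, ν) + f (ν, μ)) / (a ν - a μ)) / (z + a μ) := by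
  have hsplit : ∀ p ∈ s.offDiag, f p / ((z + a p.1) * (z + a p.2)) =
      f p / (a p.2 - a p.1) / (z + a p.1) + f p / (a p.1 - a p.2) / (z + a p.2) := by
    rintro ⟨μ, ν⟩ hp
    obtain ⟨hμ, hν, hne⟩ := mem_offDiag.1 hp
    have := hz μ hμ
    have := hz ν hν
    have := sub_ne_zero.2 (ha.ne hν hμ hne.symm)
    have := sub_ne_zero.2 (ha.ne hμ hν hne)
    field_simp
    ring
  rw [sum_congr rfl hsplit, sum_add_distrib,
    ← sum_offDiag_swap s (fun p => f p / (a p.1 - a p.2) / (z + a p.2)),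
    ← sum_add_distrib, sum_offDiag_eq_sum_sum_erase]
  simp only [Prod.swap_prod_mk, add_div, sum_add_distrib, sum_div]

end OffDiag

theorem sum_powerset_filter_subset_or_subset {ι M : Type*} [DecidableEq ι] [AddCommMonoid M]
    {U V : Finset ι} (hUV : Disjoint U V) {p : Finset ι → Prop} [DecidablePred p] (hp : ¬p ∅)
    (g : Finset ι → M) :
    ∑ J ∈ (U ∪ V).powerset with p J ∧ (J ⊆ U ∨ J ⊆ V), g J =
      ∑ J ∈ U.powerset with p J, g J + ∑ J ∈ V.powerset with p J, g J := by
  have hunion : (U ∪ V).powerset.filter (fun J => p J ∧ (J ⊆ U ∨ J ⊆ V)) =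
      U.powerset.filter p ∪ V.powerset.filter p := by
    ext J
    simp only [mem_filter, mem_powerset, mem_union]
    constructor
    · rintro ⟨-, hJ, hJU | hJV⟩
      exacts [Or.inl ⟨hJU, hJ⟩, Or.inr ⟨hJV, hJ⟩]
    · rintro (⟨hJU, hJ⟩ | ⟨hJV, hJ⟩)
      exacts [⟨hJU.trans subset_union_left, hJ, Or.inl hJU⟩,
        ⟨hJV.trans subset_union_right, hJ, Or.inr hJV⟩]
  have hdisj : Disjoint (U.powerset.filter p) (V.powerset.filter p) := by
    refine disjoint_left.2 fun J hJU hJV => ?_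
    simp only [mem_filter, mem_powerset] at hJU hJV
    have hJ : J = ∅ := disjoint_self.1 (hUV.mono hJU.1 hJV.1)
    exact hp (hJ ▸ hJU.2)
  rw [hunion, sum_union hdisj]

end Finset

theorem Nat.dvd_add_pred_iff_modEq_one {n k : ℕ} (hn : 0 < n) :
    n ∣ k + (n - 1) ↔ k ≡ 1 [MOD n] := by
  have h : k + (n - 1) + 1 ≡ k [MOD n] := by
    rw [add_assoc, Nat.sub_add_cancel hn]; exact Nat.add_modEq_right
  rw [← Nat.modEq_zero_iff_dvd]
  exact ⟨fun h0 => h.symm.trans (by simpa using h0.add_right 1),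
    fun h1 => Nat.ModEq.add_right_cancel' 1 (h.trans h1)⟩

namespace FiniteField

variable {F : Type*} [Field F] [Fintype F] [DecidableEq F]

theorem sum_units_inv_mul_pow (k : ℕ) :
    ∑ u : Fˣ, ((u⁻¹ * u ^ k : Fˣ) : F) =
      if k ≡ 1 [MOD Fintype.card F - 1] then -1 else 0 := by
  have hq : 1 < Fintype.card F := Fintype.one_lt_card
  have hinv (u : Fˣ) : u⁻¹ = u ^ (Fintype.card F - 2) := by
    rw [inv_eq_iff_mul_eq_one, ← pow_succ', show Fintype.card F - 2 + 1 = Fintype.card Fˣ by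
      rw [Fintype.card_units]; omega, pow_card_eq_one]
  simp_rw [hinv, ← pow_add, Units.val_pow_eq_pow_val, sum_pow_units,
    ← Nat.dvd_add_pred_iff_modEq_one (by omega : 0 < Fintype.card F - 1),
    show Fintype.card F - 1 - 1 = Fintype.card F - 2 by omega, add_comm k]

theorem sum_erase_eq_sum_units {M : Type*} [AddCommMonoid M] (μ : F) (g : F → M) :
    ∑ ν ∈ univ.erase μ, g ν = ∑ u : Fˣ, g (μ + u) := by
  refine (sum_bij (fun (u : Fˣ) _ => μ + u) (by simp)
    (fun _ _ _ _ h => Units.ext (add_left_cancel h)) (fun ν hν => ?_) (by simp)).symm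
  exact ⟨Units.mk0 (ν - μ) (sub_ne_zero.2 (ne_of_mem_erase hν)), mem_univ _, by simp⟩

variable {L ι : Type*} [CommRing L] [Algebra F L] [DecidableEq ι]

theorem sum_erase_algebraMap_inv_mul_prod_add (x : ι → L) (W : Finset ι) (μ : F) :
    ∑ ν ∈ univ.erase μ, algebraMap F L (ν - μ)⁻¹ * ∏ i ∈ W, (x i + algebraMap F L ν) =
      -∑ J ∈ W.powerset with J.card ≡ 1 [MOD Fintype.card F - 1],
        ∏ i ∈ W \ J, (x i + algebraMap F L μ) := by
  rw [sum_erase_eq_sum_units]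
  calc _ = ∑ u : Fˣ, ∑ J ∈ W.powerset,
        algebraMap F L ((u⁻¹ * u ^ J.card : Fˣ) : F) * ∏ i ∈ W \ J, (x i + algebraMap F L μ) := by
        refine sum_congr rfl fun u _ => ?_
        have hprod : ∏ i ∈ W, (x i + algebraMap F L (μ + u)) =
            ∏ i ∈ W, (algebraMap F L u + (x i + algebraMap F L μ)) :=
          prod_congr rfl fun i _ => by rw [map_add]; ring
        rw [add_sub_cancel_left, hprod, prod_add, mul_sum]
        simp_rw [prod_const, Units.val_mul, Units.val_pow_eq_pow_val, Units.val_inv_eq_inv_val,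
          map_mul, map_pow, mul_assoc]
    _ = ∑ J ∈ W.powerset, algebraMap F L (∑ u : Fˣ, ((u⁻¹ * u ^ J.card : Fˣ) : F)) *
          ∏ i ∈ W \ J, (x i + algebraMap F L μ) := by
        rw [sum_comm]; simp_rw [map_sum, sum_mul]
    _ = _ := by
        simp_rw [sum_units_inv_mul_pow, apply_ite (algebraMap F L), map_neg, map_one,
          map_zero, ite_mul, neg_one_mul, zero_mul, ← sum_filter, sum_neg_distrib]

theorem sum_powerset_filter_prod_sdiff {S W R : Finset ι} (hWR : Disjoint W R) (hS : W ∪ R = S)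
    (x : ι → L) (μ : F) :
    ∑ J ∈ W.powerset with J.card ≡ 1 [MOD Fintype.card F - 1],
        ∏ i ∈ S \ J, (x i + algebraMap F L μ) =
      -(∑ ν ∈ univ.erase μ, algebraMap F L (ν - μ)⁻¹ * ∏ i ∈ W, (x i + algebraMap F L ν)) *
        ∏ i ∈ R, (x i + algebraMap F L μ) := by
  rw [sum_erase_algebraMap_inv_mul_prod_add, neg_neg, sum_mul]
  refine sum_congr rfl fun J hJ => ?_
  have hJW : J ⊆ W := mem_powerset.1 (mem_filter.1 hJ).1
  rw [← hS, union_sdiff_distrib, sdiff_eq_self_of_disjoint (hWR.symm.mono_right hJW),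
    prod_union (hWR.mono_left sdiff_subset)]

end FiniteField

theorem stmt_5_general {F L ι : Type*} [Field F] [Fintype F] [DecidableEq F]
    [Field L] [Algebra F L] [DecidableEq ι]
    (q : ℕ) (hq2 : 2 < q)
    (hF : Fintype.card F = q)
    (S U V : Finset ι) (hdisj : Disjoint U V) (hUV : U ∪ V = S)
    (x : ι → L) (z : L) (hz : z ∉ Set.range (algebraMap F L)) :
    ∑ μν ∈ (Finset.univ : Finset F).offDiag,
        ((∏ i ∈ U, (x i + algebraMap F L μν.1)) *
            ∏ j ∈ V, (x j + algebraMap F L μν.2)) /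
          ((z + algebraMap F L μν.1) * (z + algebraMap F L μν.2)) =
      - ∑ J ∈ S.powerset.filter
            (fun J => J.card % (q - 1) = 1 % (q - 1) ∧ (J ⊆ U ∨ J ⊆ V)),
          ∑ μ : F, (∏ k ∈ S \ J, (x k + algebraMap F L μ)) / (z + algebraMap F L μ) := by
  subst hF
  have hz_add (μ : F) (_ : μ ∈ univ) : z + algebraMap F L μ ≠ 0 := fun h =>
    hz ⟨-μ, by rw [map_neg, neg_eq_of_add_eq_zero_left h]⟩
  have h0 : ¬(#(∅ : Finset ι) ≡ 1 [MOD Fintype.card F - 1]) := by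
    rw [card_empty, Nat.ModEq, Nat.zero_mod, Nat.one_mod_eq_one.2 (by omega)]
    exact zero_ne_one
  rw [sum_offDiag_div_mul_eq_sum_sum_erase univ _ (algebraMap F L).injective.injOn z hz_add, ← hUV,
    sum_powerset_filter_subset_or_subset hdisj h0]
  simp only [← Nat.ModEq.eq_1]
  rw [sum_comm, sum_comm (s := V.powerset.filter _)]
  simp only [← sum_div, FiniteField.sum_powerset_filter_prod_sdiff hdisj rfl,
    FiniteField.sum_powerset_filter_prod_sdiff hdisj.symm (union_comm V U)]
  rw [← sum_add_distrib, ← sum_neg_distrib]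
  refine sum_congr rfl fun μ _ => ?_
  simp only [map_inv₀, map_sub, neg_mul, neg_div, ← neg_add, neg_neg, ← add_div, sum_mul,
    ← sum_add_distrib]
  congr 1
  refine sum_congr rfl fun ν _ => ?_
  ring

/-- Partial-fraction identity over `𝔽_q`. -/
theorem stmt_5 {F L ι : Type*} [Field F] [Fintype F] [DecidableEq F]
    [Field L] [Algebra F L] [DecidableEq ι]
    (p q e : ℕ) (hp : p.Prime) (he : 0 < e) (hq : q = p ^ e) (hq2 : 2 < q)
    (hF : Fintype.card F = q)
    (S U V : Finset ι) (hdisj : Disjoint U V) (hUV : U ∪ V = S)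
    (x : ι → L) (z : L) (hz : z ∉ Set.range (algebraMap F L)) :
    ∑ μν ∈ (Finset.univ : Finset F).offDiag,
        ((∏ i ∈ U, (x i + algebraMap F L μν.1)) *
            ∏ j ∈ V, (x j + algebraMap F L μν.2)) /
          ((z + algebraMap F L μν.1) * (z + algebraMap F L μν.2)) =
      - ∑ J ∈ S.powerset.filter
            (fun J => J.card % (q - 1) = 1 % (q - 1) ∧ (J ⊆ U ∨ J ⊆ V)),
          ∑ μ : F, (∏ k ∈ S \ J, (x k + algebraMap F L μ)) / (z + algebraMap F L μ) :=
  stmt_5_general q hq2 hF S U V hdisj hUV x z hz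
end

section
/- Higher-weight partial-fraction decomposition with constants in the prime field: let N ≥ 2 and let α, β ≥ 1 be integers with N = α + β. There exists a family of constants c_{I,k} ∈ 𝔽_p, indexed by the subsets I ⊆ Σ and the integers 1 ≤ k ≤ N, such that for every family (x_i)_{i∈Σ} of elements of L and every z ∈ L ∖ 𝔽_q: Σ_{(μ,ν)∈𝔽_q×𝔽_q, μ≠ν} [∏_{i∈U}(x_i+μ) · ∏_{j∈V}(x_j+ν)] / [(z+μ)^α (z+ν)^β] = Σ_{I⊆Σ} Σ_{k=1}^{N} c_{I,k} · Σ_{μ∈𝔽_q} [∏_{i∈I}(x_i+μ)] / (z+μ)^k. -/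
/-!
With `w₁ = z + μ` and `w₂ = z + ν`, the partial-fraction identity
`1 / (w₁ ^ (a+1) * w₂ ^ (b+1)) = (w₂ - w₁)⁻¹ * (1 / (w₁ ^ (a+1) * w₂ ^ b) - 1 / (w₁ ^ a * w₂ ^ (b+1)))`
lowers the total weight by one at the cost of a factor `(ν - μ)⁻¹`, until one exponent vanishes.
Then the free point can be summed out: writing `ν = μ + t` with `t ∈ 𝔽_qˣ` and expanding
`∏ j ∈ V, (x j + μ + t)`, only the power sums `∑ t, t ^ m * t⁻¹ ^ s` remain, and these are `0` or
`-1`. So everything lies in the `ℤ`-span of the sums `∑ μ, ∏ i ∈ I, (x i + μ) / (z + μ) ^ k`, and in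
positive characteristic integer coefficients are natural numbers.
-/

open Finset

lemma mul_inv_pow_div_pow_succ_mul_pow_succ {K : Type*} [Field K] {w₁ w₂ : K}
    (h₁ : w₁ ≠ 0) (h₂ : w₂ ≠ 0) (h : w₁ ≠ w₂) (P : K) (a b s : ℕ) :
    P * (w₂ - w₁)⁻¹ ^ s / (w₁ ^ (a + 1) * w₂ ^ (b + 1)) =
      P * (w₂ - w₁)⁻¹ ^ (s + 1) / (w₁ ^ (a + 1) * w₂ ^ b) -
        P * (w₂ - w₁)⁻¹ ^ (s + 1) / (w₁ ^ a * w₂ ^ (b + 1)) := by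
  have : w₂ - w₁ ≠ 0 := sub_ne_zero.2 h.symm
  rw [pow_succ _ s]
  generalize (w₂ - w₁)⁻¹ ^ s = c
  field_simp
  ring

lemma sum_offDiag_eq_sum_sum_units {K M : Type*} [Field K] [Fintype K] [DecidableEq K]
    [AddCommMonoid M] (f : K × K → M) :
    ∑ μν ∈ (univ : Finset K).offDiag, f μν = ∑ μ, ∑ t : Kˣ, f (μ, μ + t) := by
  rw [← Fintype.sum_prod_type']
  refine (sum_bij' (fun μt _ => (μt.1, μt.1 + (μt.2 : K)))
    (fun μν h => (μν.1, Units.mk0 (μν.2 - μν.1) (sub_ne_zero.2 (mem_offDiag.1 h).2.2.symm)))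
    ?_ ?_ ?_ ?_ ?_).symm <;> simp

lemma exists_intCast_eq_sum_units_pow_mul_inv_pow (K : Type*) [Field K] [Fintype K]
    [DecidableEq K] (m s : ℕ) : ∃ k : ℤ, ∑ t : Kˣ, (t : K) ^ m * (t : K)⁻¹ ^ s = k := by
  have hcard : 2 ≤ Fintype.card K := Fintype.one_lt_card
  have hinv (t : Kˣ) : (t : K)⁻¹ = (t : K) ^ (Fintype.card K - 2) := by
    refine inv_eq_of_mul_eq_one_left ?_
    rw [← pow_succ, show Fintype.card K - 2 + 1 = Fintype.card K - 1 by omega]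
    exact FiniteField.pow_card_sub_one_eq_one _ t.ne_zero
  simp_rw [hinv, ← pow_mul, ← pow_add, FiniteField.sum_pow_units]
  exact ⟨if Fintype.card K - 1 ∣ m + (Fintype.card K - 2) * s then -1 else 0, by split_ifs <;> simp⟩

lemma exists_natCast_eq_intCast (F : Type*) {R : Type*} [Field F] [Fintype F] [Ring R]
    [Algebra F R] (k : ℤ) : ∃ n : ℕ, (n : R) = k := by
  have hq : (Fintype.card F : R) = 0 := by
    rw [← map_natCast (algebraMap F R), FiniteField.cast_card_eq_zero, map_zero]
  refine ⟨(k % Fintype.card F).toNat, ?_⟩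
  rw [← Int.cast_natCast, Int.toNat_of_nonneg (Int.emod_nonneg _ (by simp)), Int.emod_def]
  simp [hq]

section PartialFractionSums

variable {F L ι : Type*} [Field F] [Fintype F] [Field L] [Algebra F L]

variable (F) in
noncomputable def pfSum (I : Finset ι) (k : ℕ) (x : ι → L) (z : L) : L :=
  ∑ μ : F, (∏ i ∈ I, (x i + algebraMap F L μ)) / (z + algebraMap F L μ) ^ k

variable (F) in
noncomputable def pairSum (U V : Finset ι) (a b s : ℕ) (x : ι → L) (z : L) : L :=
  ∑ μν ∈ (univ : Finset F).offDiag,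
    (∏ i ∈ U, (x i + algebraMap F L μν.1)) * (∏ j ∈ V, (x j + algebraMap F L μν.2)) *
        (algebraMap F L (μν.2 - μν.1))⁻¹ ^ s /
      ((z + algebraMap F L μν.1) ^ a * (z + algebraMap F L μν.2) ^ b)

variable (F L) in
abbrev OffBase : Type _ := {z : L // z ∉ Set.range (algebraMap F L)}

variable (F L) in
noncomputable def pfSpan (S : Finset ι) (N : ℕ) : Submodule ℤ ((ι → L) → OffBase F L → L) :=
  Submodule.span ℤ
    ((fun (Ik : Finset ι × ℕ) (x : ι → L) (z : OffBase F L) => pfSum F Ik.1 Ik.2 x z) ''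
      ↑(S.powerset ×ˢ Icc 1 N))

variable {S U V : Finset ι} {N : ℕ}

lemma pfSum_mem_pfSpan {I : Finset ι} {k : ℕ} (hI : I ⊆ S) (hk : k ∈ Icc 1 N) :
    (fun (x : ι → L) (z : OffBase F L) => pfSum F I k x z) ∈ pfSpan F L S N :=
  Submodule.subset_span ⟨(I, k), by simp_all, rfl⟩

lemma exists_natCast_coeffs_of_mem_pfSpan {f : (ι → L) → OffBase F L → L}
    (hf : f ∈ pfSpan F L S N) : ∃ c : Finset ι → ℕ → ℕ, ∀ x z,
      f x z = ∑ I ∈ S.powerset, ∑ k ∈ Icc 1 N, (c I k : L) * pfSum F I k x z := by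
  obtain ⟨l, hl, rfl⟩ := (Finsupp.mem_span_image_iff_linearCombination ℤ).1 hf
  choose c hc using fun Ik => exists_natCast_eq_intCast F (R := L) (l Ik)
  refine ⟨fun I k => c (I, k), fun x z => ?_⟩
  rw [Finsupp.linearCombination_apply_of_mem_supported ℤ hl, sum_product]
  simp [Finset.sum_apply, hc, zsmul_eq_mul]

lemma pairSum_swap (U V : Finset ι) (a b s : ℕ) (x : ι → L) (z : L) :
    pairSum F U V a b s x z = (-1) ^ s * pairSum F V U b a s x z := by
  rw [pairSum, pairSum, mul_sum]
  refine sum_equiv (Equiv.prodComm F F) (by simp [eq_comm]) fun μν _ => ?_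
  simp only [Equiv.prodComm_apply, Prod.fst_swap, Prod.snd_swap, map_sub]
  rw [← neg_sub, inv_neg, neg_pow]
  ring

lemma pairSum_succ_succ {z : L} (hz : z ∉ Set.range (algebraMap F L)) (U V : Finset ι)
    (a b s : ℕ) (x : ι → L) :
    pairSum F U V (a + 1) (b + 1) s x z =
      pairSum F U V (a + 1) b (s + 1) x z - pairSum F U V a (b + 1) (s + 1) x z := by
  have hw (μ : F) : z + algebraMap F L μ ≠ 0 := fun h =>
    hz ⟨-μ, by rw [map_neg]; linear_combination -h⟩
  rw [pairSum, pairSum, pairSum, ← sum_sub_distrib]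
  refine sum_congr rfl fun μν h => ?_
  have hne : z + algebraMap F L μν.1 ≠ z + algebraMap F L μν.2 := by
    simpa using (mem_offDiag.1 h).2.2
  rw [show algebraMap F L (μν.2 - μν.1) = (z + algebraMap F L μν.2) - (z + algebraMap F L μν.1)
    by rw [map_sub]; ring]
  exact mul_inv_pow_div_pow_succ_mul_pow_succ (hw _) (hw _) hne _ a b s

variable [DecidableEq F] [DecidableEq ι]

lemma sum_units_prod_add_mul_inv_pow (V : Finset ι) (y : ι → L) (s : ℕ) :
    ∑ t : Fˣ, (∏ j ∈ V, (y j + algebraMap F L t)) * (algebraMap F L t)⁻¹ ^ s =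
      ∑ J ∈ V.powerset,
        algebraMap F L (∑ t : Fˣ, (t : F) ^ (#V - #J) * (t : F)⁻¹ ^ s) * ∏ j ∈ J, y j := by
  calc _ = ∑ t : Fˣ, ∑ J ∈ V.powerset,
          (∏ j ∈ J, y j) * algebraMap F L t ^ (#V - #J) * (algebraMap F L t)⁻¹ ^ s := by
        refine sum_congr rfl fun t _ => ?_
        rw [prod_add, sum_mul]
        refine sum_congr rfl fun J hJ => ?_
        rw [prod_const, card_sdiff_of_subset (mem_powerset.1 hJ)]
    _ = _ := by
        rw [sum_comm]
        refine sum_congr rfl fun J _ => ?_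
        rw [map_sum, sum_mul]
        refine sum_congr rfl fun t _ => ?_
        simp only [map_mul, map_pow, map_inv₀]
        ring

lemma pairSum_zero_eq (hUV : Disjoint U V) (a s : ℕ) (x : ι → L) (z : L) :
    pairSum F U V a 0 s x z = ∑ J ∈ V.powerset,
      algebraMap F L (∑ t : Fˣ, (t : F) ^ (#V - #J) * (t : F)⁻¹ ^ s) * pfSum F (U ∪ J) a x z := by
  rw [pairSum, sum_offDiag_eq_sum_sum_units]
  calc _ = ∑ μ : F, (∏ i ∈ U, (x i + algebraMap F L μ)) / (z + algebraMap F L μ) ^ a *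
        ∑ t : Fˣ, (∏ j ∈ V, ((x j + algebraMap F L μ) + algebraMap F L t)) *
          (algebraMap F L t)⁻¹ ^ s := by
        refine sum_congr rfl fun μ _ => ?_
        rw [mul_sum]
        refine sum_congr rfl fun t _ => ?_
        simp only [map_add, add_sub_cancel_left, add_assoc]
        ring
    _ = _ := by
        simp_rw [sum_units_prod_add_mul_inv_pow, pfSum, mul_sum]
        rw [sum_comm]
        refine sum_congr rfl fun J hJ => sum_congr rfl fun μ _ => ?_
        rw [prod_union (hUV.mono_right (mem_powerset.1 hJ))]
        ring

lemma pairSum_zero_mem_pfSpan (hUV : Disjoint U V) (hS : U ∪ V = S) {a : ℕ}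
    (ha : a ∈ Icc 1 N) (s : ℕ) :
    (fun (x : ι → L) (z : OffBase F L) => pairSum F U V a 0 s x z) ∈ pfSpan F L S N := by
  choose k hk using fun J : Finset ι => exists_intCast_eq_sum_units_pow_mul_inv_pow F (#V - #J) s
  have hdecomp : (fun (x : ι → L) (z : OffBase F L) => pairSum F U V a 0 s x z) =
      ∑ J ∈ V.powerset, k J • fun (x : ι → L) (z : OffBase F L) => pfSum F (U ∪ J) a x z := by
    funext x z
    simp only [pairSum_zero_eq hUV, hk, map_intCast, Finset.sum_apply, Pi.smul_apply]
    simp only [zsmul_eq_mul]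
  rw [hdecomp]
  refine sum_mem fun J hJ => Submodule.smul_mem _ _ (pfSum_mem_pfSpan ?_ ha)
  exact hS ▸ union_subset_union_right (mem_powerset.1 hJ)

theorem pairSum_mem_pfSpan (hUV : Disjoint U V) (hS : U ∪ V = S) {a b : ℕ}
    (h : a + b ∈ Icc 1 N) (s : ℕ) :
    (fun (x : ι → L) (z : OffBase F L) => pairSum F U V a b s x z) ∈ pfSpan F L S N := by
  induction a generalizing b s with
  | zero =>
    have hVU := pairSum_zero_mem_pfSpan (F := F) (L := L) hUV.symm (union_comm V U ▸ hS)
      (by simpa using h) s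
    convert Submodule.smul_mem _ ((-1 : ℤ) ^ s) hVU using 1
    funext x z
    simp [pairSum_swap U V 0 b s]
  | succ a iha =>
    induction b generalizing s with
    | zero => exact pairSum_zero_mem_pfSpan hUV hS h s
    | succ b ihb =>
      rw [mem_Icc] at h
      convert sub_mem (ihb (s := s + 1) (mem_Icc.2 ⟨by omega, by omega⟩))
        (iha (b := b + 1) (s := s + 1) (mem_Icc.2 ⟨by omega, by omega⟩)) using 1
      funext x z
      exact pairSum_succ_succ z.2 U V a b s x

end PartialFractionSums

theorem stmt_6_general {F L ι : Type*} [Field F] [Fintype F] [DecidableEq F]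
    [Field L] [Algebra F L] [DecidableEq ι]
    (S U V : Finset ι) (hdisj : Disjoint U V) (hUV : U ∪ V = S)
    (N α β : ℕ) (hα : 1 ≤ α) (hN : N = α + β) :
    ∃ c : Finset ι → ℕ → ℕ,
      ∀ (x : ι → L) (z : L), z ∉ Set.range (algebraMap F L) →
        ∑ μν ∈ (Finset.univ : Finset F).offDiag,
            ((∏ i ∈ U, (x i + algebraMap F L μν.1)) *
                ∏ j ∈ V, (x j + algebraMap F L μν.2)) /
              ((z + algebraMap F L μν.1) ^ α * (z + algebraMap F L μν.2) ^ β) =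
          ∑ I ∈ S.powerset, ∑ k ∈ Finset.Icc 1 N,
            (c I k : L) *
              ∑ μ : F, (∏ i ∈ I, (x i + algebraMap F L μ)) / (z + algebraMap F L μ) ^ k := by
  obtain ⟨c, hc⟩ := exists_natCast_coeffs_of_mem_pfSpan
    (pairSum_mem_pfSpan (F := F) (L := L) (N := N) hdisj hUV (a := α) (b := β)
      (mem_Icc.2 ⟨by omega, by omega⟩) 0)
  refine ⟨c, fun x z hz => ?_⟩
  simpa [pairSum, pfSum] using hc x ⟨z, hz⟩

/-- Higher-weight partial-fraction decomposition with constants in the prime field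
(the constants are encoded as natural-number casts, which exactly describe the
elements of the prime field `𝔽_p ⊆ L` since `L` has characteristic `p`). -/
theorem stmt_6 {F L ι : Type*} [Field F] [Fintype F] [DecidableEq F]
    [Field L] [Algebra F L] [DecidableEq ι]
    (p q e : ℕ) (hp : p.Prime) (he : 0 < e) (hq : q = p ^ e) (hq2 : 2 < q)
    (hF : Fintype.card F = q)
    (S U V : Finset ι) (hdisj : Disjoint U V) (hUV : U ∪ V = S)
    (N α β : ℕ) (hα : 1 ≤ α) (hβ : 1 ≤ β) (hN : N = α + β) :
    ∃ c : Finset ι → ℕ → ℕ,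
      ∀ (x : ι → L) (z : L), z ∉ Set.range (algebraMap F L) →
        ∑ μν ∈ (Finset.univ : Finset F).offDiag,
            ((∏ i ∈ U, (x i + algebraMap F L μν.1)) *
                ∏ j ∈ V, (x j + algebraMap F L μν.2)) /
              ((z + algebraMap F L μν.1) ^ α * (z + algebraMap F L μν.2) ^ β) =
          ∑ I ∈ S.powerset, ∑ k ∈ Finset.Icc 1 N,
            (c I k : L) *
              ∑ μ : F, (∏ i ∈ I, (x i + algebraMap F L μ)) / (z + algebraMap F L μ) ^ k :=
  stmt_6_general S U V hdisj hUV N α β hα hN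
end

section
/- Binomial congruences (proved in the course of Lemma 9.12): let q = p^e be a prime power with q ≥ 3. (i) If n = α(q−1)+1 for some integer α ≥ 0, then Σ_k C(n,k) ≡ 0 (mod p), the sum being over the integers k with 0 < k ≤ n and k ≡ 0 (mod q−1). (ii) If m = α(q−1)+2 for some integer α ≥ 0, then Σ_k C(m,k) ≡ 2 (mod p), the sum being over the integers k with 0 ≤ k ≤ m and k ≡ 1 (mod q−1). -/
private lemma dvd_iff_mod_one (d k : ℕ) (hd : 2 ≤ d) : d ∣ k + (d - 1) ↔ k % d = 1 := by
  constructor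
  · rintro ⟨c, hc⟩
    rcases c with _ | c
    · omega
    · have hk : k = d * c + 1 := by rw [Nat.mul_succ] at hc; omega
      rw [hk, Nat.add_comm, Nat.add_mul_mod_self_left]
      exact Nat.mod_eq_of_lt (by omega)
  · intro h
    refine ⟨k / d + 1, ?_⟩
    have := Nat.div_add_mod k d
    rw [Nat.mul_add, Nat.mul_one]
    omega

private lemma key_sum {K : Type*} [Field K] [Fintype K] [DecidableEq K] (N r : ℕ) :
    ∑ x : Kˣ, (x : K) ^ r * ((x : K) + 1) ^ N
      = ∑ k ∈ Finset.range (N + 1),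
          (if Fintype.card K - 1 ∣ k + r then (-1 : K) else 0) * (N.choose k : K) := by
  have h1 : ∀ x : Kˣ, (x : K) ^ r * ((x : K) + 1) ^ N
      = ∑ k ∈ Finset.range (N + 1), (x : K) ^ (k + r) * (N.choose k : K) := by
    intro x
    rw [add_pow, Finset.mul_sum]
    refine Finset.sum_congr rfl fun k _ => ?_
    rw [one_pow, pow_add]
    ring
  rw [Finset.sum_congr rfl fun x _ => h1 x, Finset.sum_comm]
  refine Finset.sum_congr rfl fun k _ => ?_
  rw [← Finset.sum_mul]
  congr 1
  have := FiniteField.sum_pow_units K (k + r)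
  simpa using this

/-- Binomial congruences: (i) if `n = α(q-1)+1` then the sum of `C(n,k)` over
`0 < k ≤ n` with `k ≡ 0 (mod q-1)` is `≡ 0 (mod p)`; (ii) if `m = α(q-1)+2` then the
sum of `C(m,k)` over `0 ≤ k ≤ m` with `k ≡ 1 (mod q-1)` is `≡ 2 (mod p)`. -/
theorem stmt_12 (p q e : ℕ) (hp : p.Prime) (he : 0 < e) (hq : q = p ^ e) (hq3 : 3 ≤ q) :
    (∀ α n : ℕ, n = α * (q - 1) + 1 →
      (∑ k ∈ Finset.filter (fun k => k % (q - 1) = 0) (Finset.Icc 1 n), n.choose k)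
        ≡ 0 [MOD p]) ∧
    (∀ α m : ℕ, m = α * (q - 1) + 2 →
      (∑ k ∈ Finset.filter (fun k => k % (q - 1) = 1 % (q - 1)) (Finset.range (m + 1)),
          m.choose k) ≡ 2 [MOD p]) := by
  classical
  haveI : Fact p.Prime := ⟨hp⟩
  set K := GaloisField p e with hK
  haveI : Fintype K := Fintype.ofFinite K
  have hcard : Fintype.card K = q := by
    rw [← Nat.card_eq_fintype_card, GaloisField.card p e he.ne', hq]
  have hd2 : 2 ≤ q - 1 := by omega
  have hqK : (q : K) = 0 := by
    rw [hq]
    push_cast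
    rw [CharP.cast_eq_zero K p]
    exact zero_pow he.ne'
  have hcast : ((q - 1 : ℕ) : K) = -1 := by
    have h1 : (1 : ℕ) ≤ q := by omega
    rw [Nat.cast_sub h1, hqK, Nat.cast_one]
    ring
  have hinj : Function.Injective (algebraMap (ZMod p) K) := (algebraMap (ZMod p) K).injective
  have main : ∀ T c : ℕ, ((T : K) = (c : K)) → T ≡ c [MOD p] := by
    intro T c h
    rw [← ZMod.natCast_eq_natCast_iff]
    apply hinj
    simpa [map_natCast] using h
  -- ¬ (q-1 ∣ 1)
  have hnd1 : ¬ (q - 1 ∣ 1) := fun h => by have := Nat.le_of_dvd one_pos h; omega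
  constructor
  · -- Part (i)
    intro α n hn
    apply main _ 0
    rw [Nat.cast_zero]
    have hkey := key_sum (K := K) n 0
    simp only [hcard, add_zero] at hkey
    -- LHS evaluation
    have hL : ∑ x : Kˣ, (x : K) ^ 0 * ((x : K) + 1) ^ n = -1 := by
      have heach : ∀ x : Kˣ, (x : K) ^ 0 * ((x : K) + 1) ^ n = (x : K) + 1 := by
        intro x
        rw [pow_zero, one_mul]
        by_cases hx : (x : K) + 1 = 0
        · rw [hx, zero_pow (by omega)]
        · rw [hn, ← hcard, pow_add, pow_mul',
            FiniteField.pow_card_sub_one_eq_one _ hx, one_pow, pow_one, one_mul]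
      rw [Finset.sum_congr rfl fun x _ => heach x, Finset.sum_add_distrib]
      have h1 : ∑ x : Kˣ, (x : K) = 0 := by
        have := FiniteField.sum_pow_units K 1
        rw [if_neg (by rw [hcard]; exact hnd1)] at this
        simpa using this
      rw [h1, zero_add, Finset.sum_const, Finset.card_univ, Fintype.card_units, hcard,
        nsmul_eq_mul, mul_one, hcast]
    -- RHS evaluation
    have hfil : Finset.filter (fun k => q - 1 ∣ k) (Finset.range (n + 1))
        = insert 0 (Finset.filter (fun k => k % (q - 1) = 0) (Finset.Icc 1 n)) := by
      ext k
      simp only [Finset.mem_filter, Finset.mem_range, Finset.mem_insert, Finset.mem_Icc,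
        Nat.lt_succ_iff, ← Nat.dvd_iff_mod_eq_zero]
      constructor
      · rintro ⟨hk1, hk2⟩
        rcases Nat.eq_zero_or_pos k with rfl | hk
        · exact Or.inl rfl
        · exact Or.inr ⟨⟨hk, hk1⟩, hk2⟩
      · rintro (rfl | ⟨⟨h1, h2⟩, h3⟩)
        · exact ⟨by omega, dvd_zero _⟩
        · exact ⟨h2, h3⟩
    have hR : ∑ k ∈ Finset.range (n + 1),
        (if q - 1 ∣ k then (-1 : K) else 0) * (n.choose k : K)
        = -(1 + ((∑ k ∈ Finset.filter (fun k => k % (q - 1) = 0) (Finset.Icc 1 n),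
            n.choose k : ℕ) : K)) := by
      have : ∑ k ∈ Finset.range (n + 1),
          (if q - 1 ∣ k then (-1 : K) else 0) * (n.choose k : K)
          = -∑ k ∈ Finset.filter (fun k => q - 1 ∣ k) (Finset.range (n + 1)),
              (n.choose k : K) := by
        rw [Finset.sum_filter, ← Finset.sum_neg_distrib]
        refine Finset.sum_congr rfl fun k _ => ?_
        split_ifs <;> ring
      rw [this, hfil, Finset.sum_insert (by simp), Nat.choose_zero_right, Nat.cast_sum,
        Nat.cast_one]
    rw [hL, hR] at hkey
    linear_combination hkey
  · -- Part (ii)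
    intro α m hm
    apply main _ 2
    have hkey := key_sum (K := K) m (q - 2)
    simp only [hcard] at hkey
    -- LHS evaluation
    have hL : ∑ x : Kˣ, (x : K) ^ (q - 2) * ((x : K) + 1) ^ m = -2 := by
      have heach : ∀ x : Kˣ, (x : K) ^ (q - 2) * ((x : K) + 1) ^ m
          = (x : K) ^ (q - 2) + 2 * (x : K) ^ (q - 1) + (x : K) ^ q := by
        intro x
        have hstep : ((x : K) + 1) ^ m = ((x : K) + 1) ^ 2 := by
          by_cases hx : (x : K) + 1 = 0
          · rw [hx, zero_pow (by omega), zero_pow (by omega)]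
          · rw [hm, ← hcard, pow_add, pow_mul',
              FiniteField.pow_card_sub_one_eq_one _ hx, one_pow, one_mul]
        rw [hstep]
        have hsq : ((x : K) + 1) ^ 2 = (x : K) ^ 2 + 2 * (x : K) + 1 := by ring
        have h1 : (x : K) ^ (q - 2) * (x : K) ^ 2 = (x : K) ^ q := by
          rw [← pow_add]; congr 1; omega
        have h2 : (x : K) ^ (q - 2) * (x : K) = (x : K) ^ (q - 1) := by
          rw [← pow_succ]; congr 1; omega
        calc (x : K) ^ (q - 2) * ((x : K) + 1) ^ 2
            = (x : K) ^ (q - 2) * (x : K) ^ 2 + 2 * ((x : K) ^ (q - 2) * (x : K))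
              + (x : K) ^ (q - 2) := by rw [hsq]; ring
          _ = (x : K) ^ (q - 2) + 2 * (x : K) ^ (q - 1) + (x : K) ^ q := by
              rw [h1, h2]; ring
      rw [Finset.sum_congr rfl fun x _ => heach x, Finset.sum_add_distrib,
        Finset.sum_add_distrib, ← Finset.mul_sum]
      have hs1 : ∑ x : Kˣ, (x : K) ^ (q - 2) = 0 := by
        have := FiniteField.sum_pow_units K (q - 2)
        rw [hcard, if_neg (fun h => by have := Nat.le_of_dvd (by omega) h; omega)] at this
        simpa using this
      have hs2 : ∑ x : Kˣ, (x : K) ^ (q - 1) = -1 := by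
        have := FiniteField.sum_pow_units K (q - 1)
        rw [hcard, if_pos dvd_rfl] at this
        simpa using this
      have hs3 : ∑ x : Kˣ, (x : K) ^ q = 0 := by
        have := FiniteField.sum_pow_units K q
        rw [hcard, if_neg (fun h => by
          have h1 : q - 1 ∣ q - (q - 1) := Nat.dvd_sub h dvd_rfl
          have h2 : q - (q - 1) = 1 := by omega
          rw [h2] at h1
          exact hnd1 h1)] at this
        simpa using this
      rw [hs1, hs2, hs3]
      ring
    -- RHS evaluation
    have hfil : Finset.filter (fun k => q - 1 ∣ k + (q - 2)) (Finset.range (m + 1))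
        = Finset.filter (fun k => k % (q - 1) = 1 % (q - 1)) (Finset.range (m + 1)) := by
      refine Finset.filter_congr fun k _ => ?_
      have h1 : (1 : ℕ) % (q - 1) = 1 := Nat.mod_eq_of_lt (by omega)
      have h2 : q - 2 = (q - 1) - 1 := by omega
      rw [h1, h2]
      exact dvd_iff_mod_one (q - 1) k hd2
    have hR : ∑ k ∈ Finset.range (m + 1),
        (if q - 1 ∣ k + (q - 2) then (-1 : K) else 0) * (m.choose k : K)
        = -((∑ k ∈ Finset.filter (fun k => k % (q - 1) = 1 % (q - 1))
            (Finset.range (m + 1)), m.choose k : ℕ) : K) := by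
      have : ∑ k ∈ Finset.range (m + 1),
          (if q - 1 ∣ k + (q - 2) then (-1 : K) else 0) * (m.choose k : K)
          = -∑ k ∈ Finset.filter (fun k => q - 1 ∣ k + (q - 2)) (Finset.range (m + 1)),
              (m.choose k : K) := by
        rw [Finset.sum_filter, ← Finset.sum_neg_distrib]
        refine Finset.sum_congr rfl fun k _ => ?_
        split_ifs <;> ring
      rw [this, hfil, Nat.cast_sum]
    rw [hL, hR] at hkey
    have h2 : ((2 : ℕ) : K) = 2 := by norm_num
    rw [h2]
    linear_combination hkey
end

section
/- Convolution (Riccati) identity for Goss polynomials: for every integer k ≥ 0, Σ_{m+n=k} G_m·G_n = (k̄ − 1)·G_k in K[X], where the sum runs over the pairs of nonnegative integers (m,n) with m + n = k and k̄ ∈ K denotes the image of the integer k in K (i.e. k reduced mod p). Equivalently, the generating series F(t) = Σ_{m≥1} G_m·t^m ∈ K[X][[t]] satisfies F² = t·(dF/dt) − F. -/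
/-- `d_n = ∏_{j=0}^{n-1} (θ^{qⁿ} − θ^{q^j})` in `K = 𝔽_q(θ)` (with `d_0 = 1`). -/
noncomputable def dCoef (F : Type*) [Field F] (q n : ℕ) : RatFunc F :=
  ∏ j ∈ Finset.range n,
    ((RatFunc.X : RatFunc F) ^ (q ^ n) - (RatFunc.X : RatFunc F) ^ (q ^ j))

/-- The Carlitz exponential series `e_C(t) = ∑_{i≥0} d_i⁻¹ t^{q^i} ∈ K[[t]]`:
its coefficient at `t^N` is `d_i⁻¹` if `N = q^i` and `0` otherwise. -/
noncomputable def carlitzExp (F : Type*) [Field F] (q : ℕ) : PowerSeries (RatFunc F) :=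
  PowerSeries.mk fun N =>
    ∑ i ∈ Finset.range (N + 1), if q ^ i = N then (dCoef F q i)⁻¹ else 0

/-! Since every exponent `q^i` with `i ≥ 1` vanishes in `K`, the Carlitz exponential satisfies
`e_C' = 1`. Differentiating `F · (1 − X e_C) = X t` then gives `(1 − X e_C) F' = X (1 + F)`;
multiplying by `t`, substituting `X t = F (1 − X e_C)` and cancelling the unit `1 − X e_C`
yields the Riccati equation `t F' = F + F²`, whose coefficient of `t^k` is the identity. -/

namespace PowerSeries

variable {R : Type*} [CommRing R]

theorem derivative_map {S : Type*} [CommRing S] (f : R →+* S) (φ : R⟦X⟧) :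
    d⁄dX S (map f φ) = map f (d⁄dX R φ) := by
  ext n
  simp [coeff_derivative]

theorem coeff_X_mul_derivative (f : R⟦X⟧) (n : ℕ) :
    coeff n (X * d⁄dX R f) = coeff n f * n := by
  cases n with
  | zero => simp
  | succ n => rw [coeff_succ_X_mul, coeff_derivative]; push_cast; rfl

theorem X_mul_derivative_eq_add_sq {f E : R⟦X⟧} {c : R} (hE : d⁄dX R E = 1)
    (hE0 : constantCoeff E = 0) (h : f * (1 - C c * E) = C c * X) :
    X * d⁄dX R f = f + f ^ 2 := by
  set U := 1 - C c * E
  have hU : IsUnit U := by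
    rw [isUnit_iff_constantCoeff]
    simp [U, hE0]
  have hDU : d⁄dX R U = -C c := by simp [U, hE]
  have hUf : U * d⁄dX R f = C c * (1 + f) := by
    have hD := congrArg (d⁄dX R) h
    rw [Derivation.leibniz, Derivation.leibniz, hDU, derivative_X, derivative_C] at hD
    simp only [smul_eq_mul] at hD
    linear_combination hD
  refine hU.mul_left_cancel ?_
  linear_combination X * hUf - (1 + f) * h

end PowerSeries

open PowerSeries

theorem constantCoeff_carlitzExp (F : Type*) [Field F] (q : ℕ) :
    constantCoeff (carlitzExp F q) = 0 := by
  simp [carlitzExp, ← coeff_zero_eq_constantCoeff_apply]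

theorem derivative_carlitzExp {F : Type*} [Field F] {q : ℕ} (hq : (q : RatFunc F) = 0) :
    d⁄dX (RatFunc F) (carlitzExp F q) = 1 := by
  ext n
  rw [coeff_derivative, carlitzExp, coeff_mk, Finset.sum_mul, Finset.sum_eq_single 0]
  · rcases n with _ | n <;> simp [dCoef, coeff_one]
  · intro i _ hi
    split_ifs with hqi
    · rw [← Nat.cast_add_one, ← hqi, Nat.cast_pow, hq, zero_pow hi, mul_zero]
    · rw [zero_mul]
  · simp

theorem stmt_15_general {F : Type*} [Field F] [Fintype F]
    (q : ℕ)
    (hF : Fintype.card F = q)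
    (G : ℕ → Polynomial (RatFunc F))
    (hGen : (PowerSeries.mk fun m => G m) *
        (1 - PowerSeries.C (R := Polynomial (RatFunc F)) Polynomial.X *
          PowerSeries.map (Polynomial.C : RatFunc F →+* Polynomial (RatFunc F))
            (carlitzExp F q)) =
      PowerSeries.C (R := Polynomial (RatFunc F)) Polynomial.X * PowerSeries.X) :
    ∀ k : ℕ, ∑ mn ∈ Finset.HasAntidiagonal.antidiagonal k, G mn.1 * G mn.2 =
      ((k : Polynomial (RatFunc F)) - 1) * G k := by
  have hq : (q : RatFunc F) = 0 := by
    rw [← hF, ← map_natCast (algebraMap F (RatFunc F)), FiniteField.cast_card_eq_zero, map_zero]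
  have hE : d⁄dX _ (map Polynomial.C (carlitzExp F q)) = 1 := by
    rw [derivative_map, derivative_carlitzExp hq, map_one]
  have hE0 : constantCoeff (map Polynomial.C (carlitzExp F q)) = 0 := by
    rw [← coeff_zero_eq_constantCoeff_apply, coeff_map, coeff_zero_eq_constantCoeff_apply,
      constantCoeff_carlitzExp, map_zero]
  have hRiccati := X_mul_derivative_eq_add_sq hE hE0 hGen
  intro k
  have hk := congrArg (coeff k) hRiccati
  rw [coeff_X_mul_derivative, map_add, pow_two, coeff_mul] at hk
  simp only [coeff_mk] at hk
  linear_combination -hk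

/-- Convolution (Riccati) identity for the Goss polynomials:
`∑_{m+n=k} G_m·G_n = (k̄ − 1)·G_k` for every `k ≥ 0`. -/
theorem stmt_15 {F : Type*} [Field F] [Fintype F]
    (p q e : ℕ) (hp : p.Prime) (he : 0 < e) (hq : q = p ^ e)
    (hF : Fintype.card F = q)
    (G : ℕ → Polynomial (RatFunc F)) (hG0 : G 0 = 0)
    (hGen : (PowerSeries.mk fun m => G m) *
        (1 - PowerSeries.C (R := Polynomial (RatFunc F)) Polynomial.X *
          PowerSeries.map (Polynomial.C : RatFunc F →+* Polynomial (RatFunc F))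
            (carlitzExp F q)) =
      PowerSeries.C (R := Polynomial (RatFunc F)) Polynomial.X * PowerSeries.X) :
    ∀ k : ℕ, ∑ mn ∈ Finset.HasAntidiagonal.antidiagonal k, G mn.1 * G mn.2 =
      ((k : Polynomial (RatFunc F)) - 1) * G k :=
  stmt_15_general q hF G hGen
end

section
/- Commutation of Hasse derivatives with q-th powers (Proposition on divided derivatives, part (4)): for every polynomial f ∈ R[X] and every integer n ≥ 1, D_n(f^q) = 0 if q does not divide n, and D_n(f^q) = (D_{n/q}(f))^q if q divides n. -/
/-!
In characteristic `p` the `q`-th power map is additive, so `f ^ q = ∑ aᵢ ^ q X ^ (q i)` and the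
coefficients of `f ^ q` are read off from those of `f`. Applied to `(X + 1) ^ (q c) = ((X + 1) ^ c) ^ q`
this gives `choose (q c) n = 0` for `q ∤ n` and `choose (q c) (q b) = choose c b ^ q` in `R`;
comparing coefficients of `D_n (f ^ q)` and `(D_{n/q} f) ^ q` then proves the claim.
-/

open Polynomial

section ExpChar

variable {R : Type*} [CommSemiring R] (p : ℕ) [ExpChar R p]

theorem Polynomial.coeff_pow_expChar_pow (g : R[X]) (e m : ℕ) :
    (g ^ p ^ e).coeff m = if p ^ e ∣ m then g.coeff (m / p ^ e) ^ p ^ e else 0 := by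
  rw [← map_iterateFrobenius_expand p g e, coeff_map, coeff_expand (expChar_pow_pos R p e)]
  split
  · exact iterateFrobenius_def p e _
  · exact map_zero _

theorem Nat.cast_choose_expChar_pow_mul (e c n : ℕ) :
    ((p ^ e * c).choose n : R) = if p ^ e ∣ n then (c.choose (n / p ^ e) : R) ^ p ^ e else 0 := by
  rw [← coeff_X_add_one_pow, pow_mul', coeff_pow_expChar_pow, coeff_X_add_one_pow]

theorem Polynomial.hasseDeriv_pow_expChar_pow (f : R[X]) (e n : ℕ) :
    hasseDeriv n (f ^ p ^ e) =
      if p ^ e ∣ n then hasseDeriv (n / p ^ e) f ^ p ^ e else 0 := by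
  have hq : 0 < p ^ e := expChar_pow_pos R p e
  split_ifs with hn
  · obtain ⟨b, rfl⟩ := hn
    ext m
    rw [hasseDeriv_coeff, coeff_pow_expChar_pow, coeff_pow_expChar_pow,
      Nat.mul_div_cancel_left _ hq]
    by_cases hm : p ^ e ∣ m
    · obtain ⟨a, rfl⟩ := hm
      rw [← mul_add, if_pos (dvd_mul_right _ _), if_pos (dvd_mul_right _ _),
        Nat.mul_div_cancel_left _ hq, Nat.mul_div_cancel_left _ hq, hasseDeriv_coeff, mul_pow,
        Nat.cast_choose_expChar_pow_mul, if_pos (dvd_mul_right _ _),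
        Nat.mul_div_cancel_left _ hq]
    · rw [if_neg (fun h ↦ hm ((Nat.dvd_add_left (dvd_mul_right _ b)).mp h)), if_neg hm, mul_zero]
  · ext m
    rw [hasseDeriv_coeff, coeff_pow_expChar_pow, coeff_zero]
    split_ifs with hmn
    · obtain ⟨c, hc⟩ := hmn
      rw [hc, Nat.cast_choose_expChar_pow_mul, if_neg hn, zero_mul]
    · exact mul_zero _

end ExpChar

theorem stmt_16_general {R : Type*} [CommRing R] (p q e : ℕ) [CharP R p] (hp : p.Prime)
    (hq : q = p ^ e) (f : Polynomial R) (n : ℕ) :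
    (¬ q ∣ n → Polynomial.hasseDeriv n (f ^ q) = 0) ∧
      (q ∣ n → Polynomial.hasseDeriv n (f ^ q) = Polynomial.hasseDeriv (n / q) f ^ q) := by
  have : ExpChar R p := ExpChar.prime hp
  subst hq
  rw [hasseDeriv_pow_expChar_pow]
  exact ⟨fun hn ↦ if_neg hn, fun hn ↦ if_pos hn⟩

/-- Commutation of Hasse (divided) derivatives with `q`-th powers in characteristic `p`:
`D_n(f^q) = 0` if `q ∤ n`, and `D_n(f^q) = (D_{n/q} f)^q` if `q ∣ n`. -/
theorem stmt_16 {R : Type*} [CommRing R] (p q e : ℕ) [CharP R p] (hp : p.Prime)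
    (he : 0 < e) (hq : q = p ^ e) (f : Polynomial R) (n : ℕ) (hn : 1 ≤ n) :
    (¬ q ∣ n → Polynomial.hasseDeriv n (f ^ q) = 0) ∧
      (q ∣ n → Polynomial.hasseDeriv n (f ^ q) = Polynomial.hasseDeriv (n / q) f ^ q) :=
  stmt_16_general p q e hp hq f n
end

section
/- Hasse derivatives of products of additive polynomials (the formula used to prove that tame series are stable under divided derivatives): let s ≥ 1 and, for 1 ≤ k ≤ s, let f_k = Σ_{j≥0} c_{k,j}·X^{q^j} ∈ R[X] be a polynomial supported on q-power exponents (only finitely many coefficients c_{k,j} ∈ R are nonzero). Then for every n ≥ 1: D_n(f₁⋯f_s) = Σ ∏_{k=1}^{s} g_k, where the sum runs over all s-tuples (i₁,…,i_s) with each i_k ∈ {0} ∪ {q^j : j ≥ 0} and i₁+⋯+i_s = n, and where g_k = f_k if i_k = 0, while g_k is the constant polynomial c_{k,j} if i_k = q^j. -/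
/-!
By the Leibniz rule, `D_n(f₁⋯f_s)` is the sum over all `t` with `t₁ + ⋯ + t_s = n` of
`∏ D_{t_k} f_k`. In characteristic `p`, the binomial coefficient `C(p^k, i)` vanishes unless
`i = 0` or `i = p^k`, so a polynomial supported on `p`-power exponents has
`D_i f = C (coeff f i)` for every `i ≠ 0`. Hence every factor is either `f_k` or a constant, and
the terms in which some `t_k` is neither `0` nor a power of `q` vanish.
-/

open Polynomial Finset

theorem Finset.Nat.sum_antidiagonalTuple_succ {M : Type*} [AddCommMonoid M] (k n : ℕ)
    (g : (Fin (k + 1) → ℕ) → M) :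
    ∑ t ∈ antidiagonalTuple (k + 1) n, g t =
      ∑ ij ∈ antidiagonal n, ∑ t ∈ antidiagonalTuple k ij.2, g (Fin.cons ij.1 t) := by
  simp only [Finset.sum, antidiagonalTuple, Multiset.Nat.antidiagonalTuple,
    List.Nat.antidiagonalTuple, List.flatMap, Multiset.map_coe, List.map_flatten, List.map_map,
    Function.comp_def, Multiset.sum_coe, List.sum_flatten, HasAntidiagonal.antidiagonal,
    Multiset.Nat.antidiagonal]

namespace Polynomial

variable {R : Type*} [CommRing R]

theorem hasseDeriv_prod_fin {s : ℕ} (f : Fin s → R[X]) (n : ℕ) :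
    hasseDeriv n (∏ k, f k) =
      ∑ t ∈ Finset.Nat.antidiagonalTuple s n, ∏ k, hasseDeriv (t k) (f k) := by
  induction s generalizing n with
  | zero =>
    cases n with
    | zero => simp
    | succ n => simp [hasseDeriv_apply_one]
  | succ s ih =>
    simp only [Fin.prod_univ_succ, hasseDeriv_mul, ih, Finset.Nat.sum_antidiagonalTuple_succ,
      mul_sum, Fin.cons_zero, Fin.cons_succ]

theorem hasseDeriv_eq_C_coeff_of_supported_on_pow {p : ℕ} [CharP R p] (hp : p.Prime) {f : R[X]}
    (hf : ∀ N, f.coeff N ≠ 0 → ∃ k, N = p ^ k) {n : ℕ} (hn : n ≠ 0) :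
    hasseDeriv n f = C (f.coeff n) := by
  ext m
  rw [hasseDeriv_coeff, coeff_C]
  split_ifs with hm
  · simp [hm]
  by_cases hc : f.coeff (m + n) = 0
  · rw [hc, mul_zero]
  obtain ⟨k, hk⟩ := hf _ hc
  have hdvd : p ∣ (m + n).choose n := hk ▸ hp.dvd_choose_pow hn (by omega)
  rw [(CharP.cast_eq_zero_iff R p _).mpr hdvd, zero_mul]

end Polynomial

theorem stmt_17_general {R : Type*} [CommRing R] (p q e : ℕ) [CharP R p] (hp : p.Prime)
    (hq : q = p ^ e)
    (s : ℕ) (f : Fin s → Polynomial R)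
    (hf : ∀ (k : Fin s) (N : ℕ), (f k).coeff N ≠ 0 → ∃ j : ℕ, N = q ^ j)
    (n : ℕ) :
    Polynomial.hasseDeriv n (∏ k, f k) =
      ∑ᶠ t ∈ {t : Fin s → ℕ |
          (∀ k, t k = 0 ∨ ∃ j : ℕ, t k = q ^ j) ∧ (∑ k, t k) = n},
        ∏ k, if t k = 0 then f k else Polynomial.C ((f k).coeff (t k)) := by
  have hD : ∀ (k : Fin s) (i : ℕ),
      hasseDeriv i (f k) = if i = 0 then f k else C ((f k).coeff i) := by
    intro k i
    split_ifs with hi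
    · rw [hi, hasseDeriv_zero']
    · refine hasseDeriv_eq_C_coeff_of_supported_on_pow hp (fun N hN => ?_) hi
      obtain ⟨j, hj⟩ := hf k N hN
      exact ⟨e * j, by rw [hj, hq, pow_mul]⟩
  rw [hasseDeriv_prod_fin, ← finsum_mem_coe_finset]
  simp only [hD]
  refine finsum_mem_inter_support_eq _ _ _ (Set.ext fun t => ?_)
  simp only [Set.mem_inter_iff, Finset.mem_coe, Finset.Nat.mem_antidiagonalTuple,
    Set.mem_ofPred_eq, Function.mem_support]
  refine ⟨fun ⟨hsum, hne⟩ => ⟨⟨fun k => ?_, hsum⟩, hne⟩, fun ⟨⟨_, hsum⟩, hne⟩ => ⟨hsum, hne⟩⟩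
  rcases eq_or_ne (t k) 0 with h0 | h0
  · exact .inl h0
  refine .inr (hf k _ fun hc => hne (prod_eq_zero (mem_univ k) ?_))
  rw [if_neg h0, hc, C_0]

/-- Hasse derivatives of products of polynomials supported on `q`-power exponents:
if each `f_k` has all its nonzero coefficients in degrees which are powers of `q`
(i.e. `f_k = ∑_j c_{k,j} X^{q^j}` with `c_{k,j} = coeff (f_k) (q^j)`), then for `n ≥ 1`,
`D_n(f₁⋯f_s)` is the sum, over all tuples `(t₁,…,t_s)` with each `t_k ∈ {0} ∪ {q^j : j ≥ 0}`
and `t₁+⋯+t_s = n`, of the products `∏_k g_k` where `g_k = f_k` if `t_k = 0` and `g_k` is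
the constant polynomial `c_{k,j}` if `t_k = q^j`. -/
theorem stmt_17 {R : Type*} [CommRing R] (p q e : ℕ) [CharP R p] (hp : p.Prime)
    (he : 0 < e) (hq : q = p ^ e)
    (s : ℕ) (hs : 1 ≤ s) (f : Fin s → Polynomial R)
    (hf : ∀ (k : Fin s) (N : ℕ), (f k).coeff N ≠ 0 → ∃ j : ℕ, N = q ^ j)
    (n : ℕ) (hn : 1 ≤ n) :
    Polynomial.hasseDeriv n (∏ k, f k) =
      ∑ᶠ t ∈ {t : Fin s → ℕ |
          (∀ k, t k = 0 ∨ ∃ j : ℕ, t k = q ^ j) ∧ (∑ k, t k) = n},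
        ∏ k, if t k = 0 then f k else Polynomial.C ((f k).coeff (t k)) :=
  stmt_17_general p q e hp hq s f hf n
end
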